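/- arXiv:2301.11186 — 5 statements merged into one kernel-verified Lean document; each statement's English description precedes it below -/
import Mathlib

section
/- Let A = (a_{n,k}) be a Köthe matrix, p ∈ [1,∞] ∪ {0}, and w = (w_n)_{n∈ℕ₀} ∈ 𝕂^{ℕ₀}. Then: (a) the following are equivalent: (i) B_w maps λ_p(A) into λ_p(A); (ii) B_w : λ_p(A) → λ_p(A) is continuous; (iii) for every k ∈ ℕ₀ there exist l ∈ ℕ₀ and C > 0 such that |w_n| a_{n,k} ≤ C a_{n+1,l} for all n ∈ ℕ₀. (b) The following are equivalent: (i) F_w maps λ_p(A) into λ_p(A); (ii) F_w : λ_p(A) → λ_p(A) is continuous; (iii) for every k ∈ ℕ₀ there exist l ∈ ℕ₀ and C > 0 such that |w_n| a_{n,k} ≤ C a_{n−1,l} for all n ≥ 1. -/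
open Filter Finset
open scoped ENNReal

noncomputable section

variable {𝕜 : Type*} [RCLike 𝕜]

/-- The parameter `p ∈ [1,∞] ∪ {0}` indexing a Köthe echelon space `λ_p(A)`:
`lp p _` stands for `p ∈ [1,∞)`, `linf` for `p = ∞` and `lzero` for `p = 0`. -/
inductive PIndex : Type
  | lp : (p : ℝ) → (hp : 1 ≤ p) → PIndex
  | linf : PIndex
  | lzero : PIndex

/-- `a` is a Köthe matrix. -/
def IsKoetheMatrix (a : ℕ → ℕ → ℝ) : Prop :=
  (∀ n k, 0 ≤ a n k) ∧ (∀ n k, a n k ≤ a n (k + 1)) ∧ ∀ n, ∃ k, 0 < a n k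

/-- Membership in the Köthe echelon space `λ_p(A)`. -/
def MemLambda (a : ℕ → ℕ → ℝ) (P : PIndex) (x : ℕ → 𝕜) : Prop :=
  match P with
  | .lp p _ => ∀ k, Summable fun n => (‖x n‖ * a n k) ^ p
  | .linf => ∀ k, BddAbove (Set.range fun n => ‖x n‖ * a n k)
  | .lzero => ∀ k, Tendsto (fun n => ‖x n‖ * a n k) atTop (nhds 0)

/-- The `k`-th canonical seminorm `‖·‖_{k,p}` of `λ_p(A)`. -/
def lambdaSeminorm (a : ℕ → ℕ → ℝ) (P : PIndex) (k : ℕ) (x : ℕ → 𝕜) : ℝ :=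
  match P with
  | .lp p _ => (∑' n, (‖x n‖ * a n k) ^ p) ^ (1 / p)
  | .linf => ⨆ n, ‖x n‖ * a n k
  | .lzero => ⨆ n, ‖x n‖ * a n k

/-- The weighted backward shift `B_w x = (w_n x_{n+1})_n`. -/
def Bshift (w : ℕ → 𝕜) (x : ℕ → 𝕜) : ℕ → 𝕜 := fun n => w n * x (n + 1)

/-- The weighted forward shift `F_w x = (w_n x_{n-1})_n`, with the convention `x_{-1} := 0`. -/
def Fshift (w : ℕ → 𝕜) (x : ℕ → 𝕜) : ℕ → 𝕜 := fun n => if n = 0 then 0 else w n * x (n - 1)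

/-- `T` maps `λ_p(A)` into itself (i.e. `T` is correctly defined on `λ_p(A)`). -/
def MapsLambda (a : ℕ → ℕ → ℝ) (P : PIndex) (T : (ℕ → 𝕜) → ℕ → 𝕜) : Prop :=
  ∀ x, MemLambda a P x → MemLambda a P (T x)

/-- `T` is a continuous operator on the Fréchet space `λ_p(A)`, expressed through the
fundamental (increasing) sequence of seminorms. -/
def ContinuousOnLambda (a : ℕ → ℕ → ℝ) (P : PIndex) (T : (ℕ → 𝕜) → ℕ → 𝕜) : Prop :=
  MapsLambda a P T ∧ ∀ k, ∃ l, ∃ C > 0, ∀ x, MemLambda a P x →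
    lambdaSeminorm a P k (T x) ≤ C * lambdaSeminorm a P l x

/-- `T` is topologizable on `λ_p(A)`: for every (fundamental) continuous seminorm there is a
continuous seminorm `q` such that for every `m ∈ ℕ` there is `γ_m > 0` with
`‖T^m x‖_k ≤ γ_m q(x)`. -/
def TopologizableOnLambda (a : ℕ → ℕ → ℝ) (P : PIndex) (T : (ℕ → 𝕜) → ℕ → 𝕜) : Prop :=
  ∀ k, ∃ l, ∀ m : ℕ, 1 ≤ m → ∃ γ > 0, ∀ x, MemLambda a P x →
    lambdaSeminorm a P k (T^[m] x) ≤ γ * lambdaSeminorm a P l x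

/-- `T` is power bounded on `λ_p(A)`. -/
def PowerBoundedOnLambda (a : ℕ → ℕ → ℝ) (P : PIndex) (T : (ℕ → 𝕜) → ℕ → 𝕜) : Prop :=
  ∀ k, ∃ l, ∃ C > 0, ∀ m : ℕ, 1 ≤ m → ∀ x, MemLambda a P x →
    lambdaSeminorm a P k (T^[m] x) ≤ C * lambdaSeminorm a P l x

/-- The `n`-th Cesàro mean `T^{[n]} = (1/n) ∑_{m=1}^n T^m`. -/
def cesaroMean (T : (ℕ → 𝕜) → ℕ → 𝕜) (n : ℕ) (x : ℕ → 𝕜) : ℕ → 𝕜 :=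
  (n : 𝕜)⁻¹ • ∑ m ∈ Icc 1 n, T^[m] x

/-- `T` is Cesàro bounded on `λ_p(A)`: the Cesàro means form an equicontinuous family. -/
def CesaroBoundedOnLambda (a : ℕ → ℕ → ℝ) (P : PIndex) (T : (ℕ → 𝕜) → ℕ → 𝕜) : Prop :=
  ∀ k, ∃ l, ∃ C > 0, ∀ n : ℕ, 1 ≤ n → ∀ x, MemLambda a P x →
    lambdaSeminorm a P k (cesaroMean T n x) ≤ C * lambdaSeminorm a P l x

/-- `T` is mean ergodic on `λ_p(A)`: there is a continuous linear operator `P` on `λ_p(A)` such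
that the Cesàro means `T^{[n]} x` converge to `P x` for every `x ∈ λ_p(A)`. -/
def MeanErgodicOnLambda (a : ℕ → ℕ → ℝ) (P : PIndex) (T : (ℕ → 𝕜) → ℕ → 𝕜) : Prop :=
  ∃ Pr : (ℕ → 𝕜) →ₗ[𝕜] (ℕ → 𝕜),
    (∀ x, MemLambda a P x → MemLambda a P (Pr x)) ∧
    (∀ k, ∃ l, ∃ C > 0, ∀ x, MemLambda a P x →
      lambdaSeminorm a P k (Pr x) ≤ C * lambdaSeminorm a P l x) ∧
    ∀ x, MemLambda a P x → ∀ k,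
      Tendsto (fun n => lambdaSeminorm a P k (cesaroMean T n x - Pr x)) atTop (nhds 0)

/-- `T` is uniformly mean ergodic on `λ_p(A)`: in addition the convergence of the Cesàro means
is uniform on bounded subsets of `λ_p(A)`. -/
def UniformlyMeanErgodicOnLambda (a : ℕ → ℕ → ℝ) (P : PIndex) (T : (ℕ → 𝕜) → ℕ → 𝕜) : Prop :=
  ∃ Pr : (ℕ → 𝕜) →ₗ[𝕜] (ℕ → 𝕜),
    (∀ x, MemLambda a P x → MemLambda a P (Pr x)) ∧
    (∀ k, ∃ l, ∃ C > 0, ∀ x, MemLambda a P x →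
      lambdaSeminorm a P k (Pr x) ≤ C * lambdaSeminorm a P l x) ∧
    ∀ S : Set (ℕ → 𝕜), (∀ x ∈ S, MemLambda a P x) →
      (∀ l, ∃ M : ℝ, ∀ x ∈ S, lambdaSeminorm a P l x ≤ M) →
      ∀ k, ∀ ε > 0, ∃ N : ℕ, ∀ n ≥ N, ∀ x ∈ S,
        lambdaSeminorm a P k (cesaroMean T n x - Pr x) ≤ ε

/-! ### Auxiliary development for Proposition 2.1 -/

section GenShift

/-- A generic weighted shift `x ↦ (v n * x (σ n))ₙ`. -/
private def genShift (v : ℕ → 𝕜) (σ : ℕ → ℕ) (x : ℕ → 𝕜) : ℕ → 𝕜 := fun n => v n * x (σ n)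

private lemma key_bound (a : ℕ → ℕ → ℝ) (_ha : IsKoetheMatrix a) (v : ℕ → 𝕜) (σ : ℕ → ℕ)
    {k l : ℕ} {C : ℝ} (hle : ∀ n, ‖v n‖ * a n k ≤ C * a (σ n) l) (x : ℕ → 𝕜) (n : ℕ) :
    ‖genShift v σ x n‖ * a n k ≤ C * (‖x (σ n)‖ * a (σ n) l) := by
  calc ‖genShift v σ x n‖ * a n k = (‖v n‖ * a n k) * ‖x (σ n)‖ := by
        simp only [genShift, norm_mul]; ring
  _ ≤ (C * a (σ n) l) * ‖x (σ n)‖ := mul_le_mul_of_nonneg_right (hle n) (norm_nonneg _)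
  _ = C * (‖x (σ n)‖ * a (σ n) l) := by ring

private lemma lp_bound (a : ℕ → ℕ → ℝ) (ha : IsKoetheMatrix a) {p : ℝ} (hp : 1 ≤ p)
    (v : ℕ → 𝕜) (σ : ℕ → ℕ) (hinj : Set.InjOn σ {n | v n ≠ 0}) {k l : ℕ} {C : ℝ} (hC : 0 < C)
    (hle : ∀ n, ‖v n‖ * a n k ≤ C * a (σ n) l) (x : ℕ → 𝕜)
    (hxl : Summable fun m => (‖x m‖ * a m l) ^ p) :
    Summable (fun n => (‖genShift v σ x n‖ * a n k) ^ p) ∧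
      (∑' n, (‖genShift v σ x n‖ * a n k) ^ p) ≤ C ^ p * ∑' m, (‖x m‖ * a m l) ^ p := by
  classical
  have hp0 : p ≠ 0 := ne_of_gt (lt_of_lt_of_le one_pos hp)
  set F : ℕ → ℝ := fun m => C ^ p * (‖x m‖ * a m l) ^ p with hFdef
  have hF : Summable F := hxl.mul_left _
  have hFnn : ∀ m, 0 ≤ F m := fun m =>
    mul_nonneg (Real.rpow_nonneg hC.le p)
      (Real.rpow_nonneg (mul_nonneg (norm_nonneg _) (ha.1 _ _)) p)
  set g : ℕ → ℝ := fun n => if v n = 0 then 0 else F (σ n) with hgdef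
  have hgnn : ∀ n, 0 ≤ g n := by
    intro n; simp only [g]; split
    · exact le_refl 0
    · exact hFnn _
  have hrange : ∀ N : ℕ, ∑ n ∈ Finset.range N, g n ≤ ∑' m, F m := by
    intro N
    have h1 : ∑ n ∈ Finset.range N, g n
        = ∑ n ∈ (Finset.range N).filter (fun n => v n ≠ 0), F (σ n) := by
      rw [Finset.sum_filter]
      apply Finset.sum_congr rfl
      intro n _
      by_cases h : v n = 0 <;> simp [g, h]
    have hmaps : ∀ n ∈ (Finset.range N).filter (fun n => v n ≠ 0), n ∈ {n | v n ≠ 0} := by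
      intro n hn
      exact (Finset.mem_filter.1 hn).2
    rw [h1, ← Finset.sum_image (fun n hn m hm hnm => hinj (hmaps n hn) (hmaps m hm) hnm)]
    exact Summable.sum_le_tsum _ (fun m _ => hFnn m) hF
  have hg : Summable g := summable_of_sum_range_le hgnn hrange
  have hgt : ∑' n, g n ≤ ∑' m, F m := Summable.tsum_le_of_sum_range_le hg hrange
  have hptle : ∀ n, (‖genShift v σ x n‖ * a n k) ^ p ≤ g n := by
    intro n
    by_cases h : v n = 0
    · have h0 : genShift v σ x n = 0 := by simp [genShift, h]
      simp only [g, if_pos h, h0, norm_zero, zero_mul]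
      rw [Real.zero_rpow hp0]
    · simp only [g, if_neg h, F]
      rw [← Real.mul_rpow hC.le (mul_nonneg (norm_nonneg _) (ha.1 _ _))]
      exact Real.rpow_le_rpow (mul_nonneg (norm_nonneg _) (ha.1 _ _))
        (key_bound a ha v σ hle x n) (le_trans zero_le_one hp)
  have hnn : ∀ n, 0 ≤ (‖genShift v σ x n‖ * a n k) ^ p := fun n =>
    Real.rpow_nonneg (mul_nonneg (norm_nonneg _) (ha.1 _ _)) p
  have hsum : Summable (fun n => (‖genShift v σ x n‖ * a n k) ^ p) :=
    Summable.of_nonneg_of_le hnn hptle hg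
  refine ⟨hsum, ?_⟩
  calc (∑' n, (‖genShift v σ x n‖ * a n k) ^ p) ≤ ∑' n, g n := Summable.tsum_le_tsum hptle hsum hg
  _ ≤ ∑' m, F m := hgt
  _ = C ^ p * ∑' m, (‖x m‖ * a m l) ^ p := tsum_mul_left

private lemma gen_cont (a : ℕ → ℕ → ℝ) (ha : IsKoetheMatrix a) (P : PIndex)
    (v : ℕ → 𝕜) (σ : ℕ → ℕ) (hσtop : Tendsto σ atTop atTop)
    (hinj : Set.InjOn σ {n | v n ≠ 0})
    (hest : ∀ k : ℕ, ∃ l : ℕ, ∃ C > (0 : ℝ), ∀ n, ‖v n‖ * a n k ≤ C * a (σ n) l) :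
    ContinuousOnLambda a P (genShift v σ) := by
  constructor
  · -- MapsLambda
    intro x hx
    cases P with
    | lp p hp =>
      intro k
      obtain ⟨l, C, hC, hle⟩ := hest k
      exact (lp_bound a ha hp v σ hinj hC hle x (hx l)).1
    | linf =>
      intro k
      obtain ⟨l, C, hC, hle⟩ := hest k
      obtain ⟨M, hM⟩ := hx l
      refine ⟨C * M, ?_⟩
      rintro y ⟨n, rfl⟩
      refine le_trans (key_bound a ha v σ hle x n) ?_
      exact mul_le_mul_of_nonneg_left (hM (Set.mem_range_self (σ n))) hC.le
    | lzero =>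
      intro k
      obtain ⟨l, C, hC, hle⟩ := hest k
      apply squeeze_zero (fun n => mul_nonneg (norm_nonneg _) (ha.1 _ _))
        (key_bound a ha v σ hle x)
      have h0 : Tendsto (fun n => ‖x (σ n)‖ * a (σ n) l) atTop (nhds 0) :=
        (hx l).comp hσtop
      simpa using h0.const_mul C
  · -- seminorm estimate
    intro k
    obtain ⟨l, C, hC, hle⟩ := hest k
    refine ⟨l, C, hC, fun x hx => ?_⟩
    cases P with
    | lp p hp =>
      have hp0 : p ≠ 0 := ne_of_gt (lt_of_lt_of_le one_pos hp)
      obtain ⟨hsum, hts⟩ := lp_bound a ha hp v σ hinj hC hle x (hx l)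
      simp only [lambdaSeminorm]
      have hS : 0 ≤ ∑' m, (‖x m‖ * a m l) ^ p :=
        tsum_nonneg fun m => Real.rpow_nonneg (mul_nonneg (norm_nonneg _) (ha.1 _ _)) p
      have h1 : (∑' n, (‖genShift v σ x n‖ * a n k) ^ p) ^ (1 / p)
          ≤ (C ^ p * ∑' m, (‖x m‖ * a m l) ^ p) ^ (1 / p) := by
        apply Real.rpow_le_rpow ?_ hts (by positivity)
        exact tsum_nonneg fun n =>
          Real.rpow_nonneg (mul_nonneg (norm_nonneg _) (ha.1 _ _)) p
      refine le_trans h1 ?_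
      rw [Real.mul_rpow (Real.rpow_nonneg hC.le p) hS, ← Real.rpow_mul hC.le,
        mul_one_div_cancel hp0, Real.rpow_one]
    | linf =>
      simp only [lambdaSeminorm]
      refine ciSup_le fun n => ?_
      refine le_trans (key_bound a ha v σ hle x n) ?_
      exact mul_le_mul_of_nonneg_left (le_ciSup (hx l) (σ n)) hC.le
    | lzero =>
      simp only [lambdaSeminorm]
      refine ciSup_le fun n => ?_
      refine le_trans (key_bound a ha v σ hle x n) ?_
      exact mul_le_mul_of_nonneg_left (le_ciSup ((hx l).bddAbove_range) (σ n)) hC.le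

private lemma gen_sel (a : ℕ → ℕ → ℝ) (ha : IsKoetheMatrix a) (v : ℕ → 𝕜) (σ : ℕ → ℕ) (k : ℕ)
    (hneg : ∀ l : ℕ, ∀ C : ℝ, 0 < C → ∃ n, C * a (σ n) l < ‖v n‖ * a n k) :
    ∃ s : ℕ → ℕ, StrictMono s ∧ (∀ j, 0 < s j) ∧
      ∀ j, (4 : ℝ) ^ j * a (σ (s j)) j < ‖v (s j)‖ * a (s j) k := by
  classical
  have amono : ∀ n, Monotone (a n) := fun n => monotone_nat_of_le_succ (ha.2.1 n)
  have step : ∀ N j : ℕ, ∃ n, N < n ∧ (4 : ℝ) ^ j * a (σ n) j < ‖v n‖ * a n k := by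
    intro N j
    choose lf hlf using ha.2.2
    set L := max j ((Finset.range (N + 1)).sup fun n => lf (σ n)) with hL
    have haL : ∀ n, n ≤ N → 0 < a (σ n) L := by
      intro n hn
      have hmem : n ∈ Finset.range (N + 1) := Finset.mem_range.2 (Nat.lt_succ_of_le hn)
      refine lt_of_lt_of_le (hlf (σ n)) (amono _ ?_)
      exact le_trans (Finset.le_sup (f := fun n => lf (σ n)) hmem) (le_max_right _ _)
    set C := (4 : ℝ) ^ j + ∑ n ∈ Finset.range (N + 1), (‖v n‖ * a n k) / a (σ n) L with hCdef
    have hterm_nn : ∀ n ∈ Finset.range (N + 1), 0 ≤ (‖v n‖ * a n k) / a (σ n) L :=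
      fun n _ => div_nonneg (mul_nonneg (norm_nonneg _) (ha.1 _ _)) (ha.1 _ _)
    have hsum_nn : 0 ≤ ∑ n ∈ Finset.range (N + 1), (‖v n‖ * a n k) / a (σ n) L :=
      Finset.sum_nonneg hterm_nn
    have hCpos : 0 < C := add_pos_of_pos_of_nonneg (by positivity) hsum_nn
    obtain ⟨n, hn⟩ := hneg L C hCpos
    have hnN : N < n := by
      by_contra hcon
      push_neg at hcon
      have h1 : (‖v n‖ * a n k) / a (σ n) L ≤ C := by
        have h2 := Finset.single_le_sum hterm_nn (Finset.mem_range.2 (by omega : n < N + 1))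
        have h3 : (0 : ℝ) < 4 ^ j := by positivity
        rw [hCdef]; linarith
      rw [div_le_iff₀ (haL n hcon)] at h1
      linarith
    refine ⟨n, hnN, lt_of_le_of_lt ?_ hn⟩
    have h4C : (4 : ℝ) ^ j ≤ C := le_add_of_nonneg_right hsum_nn
    exact mul_le_mul h4C (amono _ (le_max_left _ _)) (ha.1 _ _) hCpos.le
  choose f hf1 hf2 using step
  refine ⟨fun j => Nat.rec (f 0 0) (fun i ih => f ih (i + 1)) j, ?_, ?_, ?_⟩
  · exact strictMono_nat_of_lt_succ fun j => hf1 _ (j + 1)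
  · intro j
    induction j with
    | zero => exact hf1 0 0
    | succ i ih => exact lt_trans ih (hf1 _ (i + 1))
  · intro j
    cases j with
    | zero => exact hf2 0 0
    | succ i => exact hf2 _ (i + 1)

private lemma gen_construct (a : ℕ → ℕ → ℝ) (ha : IsKoetheMatrix a) (P : PIndex)
    (v : ℕ → 𝕜) (σ : ℕ → ℕ) (k : ℕ) (s : ℕ → ℕ)
    (hs : StrictMono s) (hss : StrictMono fun j => σ (s j))
    (hval : ∀ j, (4 : ℝ) ^ j * a (σ (s j)) j < ‖v (s j)‖ * a (s j) k) :
    ∃ x : ℕ → 𝕜, MemLambda a P x ∧ ¬ MemLambda a P (genShift v σ x) := by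
  classical
  have amono : ∀ n, Monotone (a n) := fun n => monotone_nat_of_le_succ (ha.2.1 n)
  set m : ℕ → ℕ := fun j => σ (s j) with hmdef
  have hmmono : StrictMono m := hss
  have hW : ∀ j, 0 < ‖v (s j)‖ * a (s j) k := fun j =>
    lt_of_le_of_lt (mul_nonneg (by positivity) (ha.1 _ _)) (hval j)
  set t : ℕ → ℝ := fun j => if a (m j) j = 0 then 2 ^ j / (‖v (s j)‖ * a (s j) k)
      else (1 / 2 : ℝ) ^ j / a (m j) j with htdef
  have ht : ∀ j, 0 < t j := by
    intro j; simp only [t]; split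
    · exact div_pos (by positivity) (hW j)
    · rename_i h
      exact div_pos (by positivity) (lt_of_le_of_ne (ha.1 _ _) (Ne.symm h))
  have hP1 : ∀ j, t j * a (m j) j ≤ (1 / 2 : ℝ) ^ j := by
    intro j; simp only [t]; split
    · rename_i h; rw [h, mul_zero]; positivity
    · rename_i h; rw [div_mul_cancel₀ _ h]
  have hP2 : ∀ j, (2 : ℝ) ^ j ≤ t j * (‖v (s j)‖ * a (s j) k) := by
    intro j; simp only [t]; split
    · rw [div_mul_cancel₀ _ (ne_of_gt (hW j))]
    · rename_i h
      have hA : 0 < a (m j) j := lt_of_le_of_ne (ha.1 _ _) (Ne.symm h)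
      rw [div_mul_eq_mul_div, le_div_iff₀ hA]
      calc (2 : ℝ) ^ j * a (m j) j = (1 / 2 : ℝ) ^ j * ((4 : ℝ) ^ j * a (m j) j) := by
            rw [← mul_assoc, ← mul_pow]; norm_num
      _ ≤ (1 / 2 : ℝ) ^ j * (‖v (s j)‖ * a (s j) k) :=
            mul_le_mul_of_nonneg_left (hval j).le (by positivity)
  set x : ℕ → 𝕜 := fun n => if h : ∃ j, m j = n then ((t h.choose : ℝ) : 𝕜) else 0 with hxdef
  have hminj : Function.Injective m := hmmono.injective
  have hxm : ∀ j, x (m j) = ((t j : ℝ) : 𝕜) := by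
    intro j
    have h : ∃ i, m i = m j := ⟨j, rfl⟩
    simp only [x, dif_pos h]
    exact congrArg (fun i => ((t i : ℝ) : 𝕜)) (hminj h.choose_spec)
  have hx0 : ∀ n, (¬ ∃ j, m j = n) → x n = 0 := fun n h => dif_neg h
  have hnx : ∀ j, ‖x (m j)‖ = t j := by
    intro j; rw [hxm j, RCLike.norm_ofReal, abs_of_pos (ht j)]
  have hxsmall : ∀ k' j, k' ≤ j → ‖x (m j)‖ * a (m j) k' ≤ (1 / 2 : ℝ) ^ j := by
    intro k' j hkj
    rw [hnx]
    exact le_trans (mul_le_mul_of_nonneg_left (amono _ hkj) (ht j).le) (hP1 j)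
  refine ⟨x, ?_, ?_⟩
  · -- membership of x
    cases P with
    | lp p hp =>
      intro k'
      have hp0 : p ≠ 0 := ne_of_gt (lt_of_lt_of_le one_pos hp)
      have hzero : ∀ n ∉ Set.range m, (‖x n‖ * a n k') ^ p = 0 := by
        intro n hn
        rw [hx0 n (by simpa [Set.mem_range] using hn), norm_zero, zero_mul,
          Real.zero_rpow hp0]
      rw [← hminj.summable_iff hzero, ← summable_nat_add_iff k']
      have hb : ∀ j : ℕ,
          ((fun n => (‖x n‖ * a n k') ^ p) ∘ m) (j + k') ≤ (1 / 2 : ℝ) ^ j := by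
        intro j
        have h1 : ‖x (m (j + k'))‖ * a (m (j + k')) k' ≤ (1 / 2 : ℝ) ^ (j + k') :=
          hxsmall k' (j + k') (by omega)
        have h2 : (‖x (m (j + k'))‖ * a (m (j + k')) k') ^ p
            ≤ ((1 / 2 : ℝ) ^ (j + k')) ^ p :=
          Real.rpow_le_rpow (mul_nonneg (norm_nonneg _) (ha.1 _ _)) h1
            (le_trans zero_le_one hp)
        have h3 : ((1 / 2 : ℝ) ^ (j + k')) ^ p ≤ ((1 / 2 : ℝ) ^ (j + k')) ^ (1 : ℝ) :=
          Real.rpow_le_rpow_of_exponent_ge (by positivity)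
            (pow_le_one₀ (by norm_num) (by norm_num)) hp
        have h4 : ((1 / 2 : ℝ) ^ (j + k')) ^ (1 : ℝ) = (1 / 2 : ℝ) ^ (j + k') :=
          Real.rpow_one _
        have h5 : ((1 / 2 : ℝ)) ^ (j + k') ≤ (1 / 2 : ℝ) ^ j :=
          pow_le_pow_of_le_one (by norm_num) (by norm_num) (by omega)
        show (‖x (m (j + k'))‖ * a (m (j + k')) k') ^ p ≤ (1 / 2 : ℝ) ^ j
        exact le_trans h2 (le_trans h3 (le_of_eq_of_le h4 h5))
      exact Summable.of_nonneg_of_le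
        (fun j => Real.rpow_nonneg (mul_nonneg (norm_nonneg _) (ha.1 _ _)) p)
        hb summable_geometric_two
    | linf =>
      intro k'
      have hsum_nn : 0 ≤ ∑ j ∈ Finset.range k', t j * a (m j) k' :=
        Finset.sum_nonneg fun j _ => mul_nonneg (ht j).le (ha.1 _ _)
      refine ⟨1 + ∑ j ∈ Finset.range k', t j * a (m j) k', ?_⟩
      rintro y ⟨n, rfl⟩
      show ‖x n‖ * a n k' ≤ 1 + ∑ j ∈ Finset.range k', t j * a (m j) k'
      by_cases h : ∃ j, m j = n
      · obtain ⟨j, rfl⟩ := h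
        rcases le_or_gt k' j with hkj | hjk
        · have h1 := hxsmall k' j hkj
          have h2 : ((1 : ℝ) / 2) ^ j ≤ 1 := pow_le_one₀ (by norm_num) (by norm_num)
          linarith
        · rw [hnx]
          have h1 : t j * a (m j) k' ≤ ∑ i ∈ Finset.range k', t i * a (m i) k' :=
            Finset.single_le_sum (f := fun i => t i * a (m i) k')
              (fun i _ => mul_nonneg (ht i).le (ha.1 _ _)) (Finset.mem_range.2 hjk)
          linarith
      · rw [hx0 n h, norm_zero, zero_mul]; linarith
    | lzero =>
      intro k'
      rw [Metric.tendsto_atTop]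
      intro ε hε
      obtain ⟨J0, hJ0⟩ := exists_pow_lt_of_lt_one hε (by norm_num : (1 / 2 : ℝ) < 1)
      refine ⟨m (max J0 k') + 1, fun n hn => ?_⟩
      show dist (‖x n‖ * a n k') 0 < ε
      rw [Real.dist_eq, sub_zero, abs_of_nonneg (mul_nonneg (norm_nonneg _) (ha.1 _ _))]
      by_cases h : ∃ j, m j = n
      · obtain ⟨j, rfl⟩ := h
        have hj : max J0 k' < j := by
          have h1 : m (max J0 k') < m j := by omega
          exact hmmono.lt_iff_lt.1 h1
        calc ‖x (m j)‖ * a (m j) k' ≤ (1 / 2 : ℝ) ^ j :=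
              hxsmall k' j (le_of_lt (lt_of_le_of_lt (le_max_right _ _) hj))
        _ ≤ (1 / 2 : ℝ) ^ J0 :=
              pow_le_pow_of_le_one (by norm_num) (by norm_num) (by omega)
        _ < ε := hJ0
      · rw [hx0 n h, norm_zero, zero_mul]; exact hε
  · -- genShift v σ x is not in λ_p
    have hbig : ∀ j, (2 : ℝ) ^ j ≤ ‖genShift v σ x (s j)‖ * a (s j) k := by
      intro j
      have h0 : genShift v σ x (s j) = v (s j) * x (m j) := rfl
      rw [h0, norm_mul, hnx]
      calc (2 : ℝ) ^ j ≤ t j * (‖v (s j)‖ * a (s j) k) := hP2 j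
      _ = ‖v (s j)‖ * t j * a (s j) k := by ring
    have hone : ∀ j : ℕ, (1 : ℝ) ≤ 2 ^ j := fun j => one_le_pow₀ one_le_two
    cases P with
    | lp p hp =>
      intro hmem
      have hsum := hmem k
      have h0 := hsum.tendsto_atTop_zero.comp hs.tendsto_atTop
      obtain ⟨j, hj0⟩ := (h0.eventually (gt_mem_nhds (by norm_num : (0 : ℝ) < 1))).exists
      have hj : (‖genShift v σ x (s j)‖ * a (s j) k) ^ p < 1 := hj0
      have h1 : (1 : ℝ) ≤ (‖genShift v σ x (s j)‖ * a (s j) k) ^ p := by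
        have hbase : (1 : ℝ) ≤ ‖genShift v σ x (s j)‖ * a (s j) k :=
          le_trans (hone j) (hbig j)
        calc (1 : ℝ) = 1 ^ p := (Real.one_rpow p).symm
        _ ≤ _ := Real.rpow_le_rpow zero_le_one hbase (le_trans zero_le_one hp)
      linarith
    | linf =>
      intro hmem
      obtain ⟨M, hM⟩ := hmem k
      obtain ⟨j, hj⟩ := pow_unbounded_of_one_lt M (by norm_num : (1 : ℝ) < 2)
      have h1 : ‖genShift v σ x (s j)‖ * a (s j) k ≤ M := hM (Set.mem_range_self (s j))
      have h2 := hbig j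
      linarith
    | lzero =>
      intro hmem
      have h0 := (hmem k).comp hs.tendsto_atTop
      obtain ⟨j, hj0⟩ := (h0.eventually (gt_mem_nhds (by norm_num : (0 : ℝ) < 1))).exists
      have hj : ‖genShift v σ x (s j)‖ * a (s j) k < 1 := hj0
      have h2 := hbig j
      have h3 := hone j
      linarith

private lemma gen_tfae (a : ℕ → ℕ → ℝ) (ha : IsKoetheMatrix a) (P : PIndex)
    (v : ℕ → 𝕜) (σ : ℕ → ℕ)
    (hσ : ∀ ⦃i j : ℕ⦄, 0 < i → i < j → σ i < σ j)
    (hσtop : Tendsto σ atTop atTop)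
    (hinj : Set.InjOn σ {n | v n ≠ 0}) :
    [MapsLambda a P (genShift v σ),
     ContinuousOnLambda a P (genShift v σ),
     ∀ k : ℕ, ∃ l : ℕ, ∃ C > (0 : ℝ), ∀ n : ℕ, ‖v n‖ * a n k ≤ C * a (σ n) l].TFAE := by
  tfae_have 2 → 1 := fun h => h.1
  tfae_have 3 → 2 := fun h => gen_cont a ha P v σ hσtop hinj h
  tfae_have 1 → 3 := by
    intro h1
    by_contra hne
    push_neg at hne
    obtain ⟨k, hk⟩ := hne
    obtain ⟨s, hs, hspos, hval⟩ := gen_sel a ha v σ k fun l C hC => hk l C hC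
    have hss : StrictMono fun j => σ (s j) := fun i j hij => hσ (hspos i) (hs hij)
    obtain ⟨x, hx, hTx⟩ := gen_construct a ha P v σ k s hs hss hval
    exact hTx (h1 x hx)
  tfae_finish

end GenShift

/-- Proposition 2.1: correct definedness, continuity and the weight/matrix estimate are
equivalent, for the weighted backward shift and for the weighted forward shift. -/
theorem statement0 {𝕜 : Type*} [RCLike 𝕜] (a : ℕ → ℕ → ℝ) (ha : IsKoetheMatrix a)
    (P : PIndex) (w : ℕ → 𝕜) :
    [MapsLambda a P (Bshift w),
     ContinuousOnLambda a P (Bshift w),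
     ∀ k : ℕ, ∃ l : ℕ, ∃ C > (0 : ℝ), ∀ n : ℕ, ‖w n‖ * a n k ≤ C * a (n + 1) l].TFAE
    ∧
    [MapsLambda a P (Fshift w),
     ContinuousOnLambda a P (Fshift w),
     ∀ k : ℕ, ∃ l : ℕ, ∃ C > (0 : ℝ), ∀ n : ℕ, 1 ≤ n → ‖w n‖ * a n k ≤ C * a (n - 1) l].TFAE := by
  constructor
  · -- backward shift
    exact gen_tfae a ha P w (fun n => n + 1) (fun i j _ h => show i + 1 < j + 1 by omega)
      (tendsto_atTop_atTop.2 fun b => ⟨b, fun n hn => show b ≤ n + 1 by omega⟩)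
      (fun i _ j _ h => by
        have h' : i + 1 = j + 1 := h
        omega)
  · -- forward shift
    have hF : Fshift w = genShift (fun n => if n = 0 then 0 else w n) (fun n => n - 1) := by
      funext x n
      by_cases h : n = 0 <;> simp [Fshift, genShift, h]
    have hG := gen_tfae a ha P (fun n => if n = 0 then 0 else w n) (fun n => n - 1)
      (fun i j hi hij => show i - 1 < j - 1 by omega)
      (tendsto_atTop_atTop.2 fun b => ⟨b + 1, fun n hn => show b ≤ n - 1 by omega⟩)
      (by
        intro i hi j hj hij
        simp only [Set.mem_setOf_eq] at hi hj
        have hi0 : i ≠ 0 := by intro h; exact hi (by simp [h])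
        have hj0 : j ≠ 0 := by intro h; exact hj (by simp [h])
        have hij' : i - 1 = j - 1 := hij
        omega)
    have hiff : (∀ k : ℕ, ∃ l : ℕ, ∃ C > (0 : ℝ), ∀ n : ℕ,
          ‖if n = 0 then (0 : 𝕜) else w n‖ * a n k ≤ C * a (n - 1) l) ↔
        (∀ k : ℕ, ∃ l : ℕ, ∃ C > (0 : ℝ), ∀ n : ℕ, 1 ≤ n →
          ‖w n‖ * a n k ≤ C * a (n - 1) l) := by
      constructor
      · intro h k
        obtain ⟨l, C, hC, hle⟩ := h k
        refine ⟨l, C, hC, fun n hn => ?_⟩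
        have h1 := hle n
        rwa [if_neg (by omega : ¬ n = 0)] at h1
      · intro h k
        obtain ⟨l, C, hC, hle⟩ := h k
        refine ⟨l, C, hC, fun n => ?_⟩
        by_cases hn : n = 0
        · subst hn
          rw [if_pos rfl, norm_zero, zero_mul]
          exact mul_nonneg hC.le (ha.1 _ _)
        · rw [if_neg hn]
          exact hle n (by omega)
    rw [hF]
    tfae_have 1 → 2 := (hG.out 0 1).mp
    tfae_have 2 → 1 := fun h => h.1
    tfae_have 1 → 3 := fun h => hiff.mp ((hG.out 0 2).mp h)
    tfae_have 3 → 1 := fun h => (hG.out 0 2).mpr (hiff.mpr h)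
    tfae_finish
end
end

section
/- Let α = (α_n)_{n∈ℕ₀} be an exponent sequence with limsup_{n→∞} α_{n+1}/α_n < ∞, and let w ∈ 𝕂^{ℕ₀}. Then the following are equivalent: (i) B_w maps Λ_∞(α) into itself; (ii) B_w is continuous on Λ_∞(α); (iii) F_w maps Λ_∞(α) into itself; (iv) F_w is continuous on Λ_∞(α); (v) limsup_{n→∞} ln|w_n| / α_n < ∞. -/
open Filter Finset
open scoped ENNReal

noncomputable section

variable {𝕜 : Type*} [RCLike 𝕜]

/-- An exponent sequence: monotonically increasing, non-negative, tending to infinity. -/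
def IsExponentSeq (al : ℕ → ℝ) : Prop :=
  Monotone al ∧ (∀ n, 0 ≤ al n) ∧ Tendsto al atTop atTop

/-- The Köthe matrix of the power series space of infinite type `Λ_∞(α)`. -/
def AInf (al : ℕ → ℝ) : ℕ → ℕ → ℝ := fun n k => Real.exp (k * al n)

/-- The Köthe matrix of the power series space of finite type `Λ_0(α)`. -/
def AZero (al : ℕ → ℝ) : ℕ → ℕ → ℝ := fun n k => Real.exp (-al n / (k + 1))

/-- Power series spaces are the `λ_1` spaces of the above matrices. -/
abbrev L1 : PIndex := PIndex.lp 1 le_rfl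


section Stmt1Aux

variable {𝕜 : Type*} [RCLike 𝕜]

lemma memL1_iff (a : ℕ → ℕ → ℝ) (x : ℕ → 𝕜) :
    MemLambda a L1 x ↔ ∀ k, Summable fun n => ‖x n‖ * a n k := by
  simp [MemLambda, Real.rpow_one]

lemma semi_eq (a : ℕ → ℕ → ℝ) (k : ℕ) (x : ℕ → 𝕜) :
    lambdaSeminorm a L1 k x = ∑' n, ‖x n‖ * a n k := by
  simp [lambdaSeminorm, Real.rpow_one]

lemma weight_bound {al : ℕ → ℝ} (hal : IsExponentSeq al) {w : ℕ → 𝕜}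
    (h : IsBoundedUnder (· ≤ ·) atTop fun n => Real.log ‖w n‖ / al n) :
    ∃ (L : ℕ) (C : ℝ), 1 ≤ C ∧ ∀ n, ‖w n‖ ≤ C * Real.exp (L * al n) := by
  obtain ⟨b, hb⟩ := h
  rw [eventually_map] at hb
  have h1 : ∀ᶠ n in atTop, 1 ≤ al n := hal.2.2.eventually_ge_atTop 1
  obtain ⟨N, hN⟩ := eventually_atTop.mp (hb.and h1)
  refine ⟨Nat.ceil (max b 0), 1 + ∑ n ∈ Finset.range N, ‖w n‖, ?_, ?_⟩
  · have : (0:ℝ) ≤ ∑ n ∈ Finset.range N, ‖w n‖ :=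
      Finset.sum_nonneg fun _ _ => norm_nonneg _
    linarith
  · have hL : max b 0 ≤ (Nat.ceil (max b 0) : ℝ) := Nat.le_ceil _
    have hC1 : (1:ℝ) ≤ 1 + ∑ n ∈ Finset.range N, ‖w n‖ := by
      have : (0:ℝ) ≤ ∑ n ∈ Finset.range N, ‖w n‖ :=
        Finset.sum_nonneg fun _ _ => norm_nonneg _
      linarith
    intro n
    have hexp1 : (1:ℝ) ≤ Real.exp ((Nat.ceil (max b 0) : ℝ) * al n) := by
      rw [← Real.exp_zero]
      apply Real.exp_le_exp.mpr
      have h0 : (0:ℝ) ≤ (Nat.ceil (max b 0) : ℝ) := Nat.cast_nonneg _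
      nlinarith [hal.2.1 n]
    rcases lt_or_ge n N with hn | hn
    · have : ‖w n‖ ≤ ∑ m ∈ Finset.range N, ‖w m‖ :=
        Finset.single_le_sum (fun m _ => norm_nonneg (w m)) (Finset.mem_range.mpr hn)
      nlinarith [norm_nonneg (w n)]
    · obtain ⟨hlog, hal1⟩ := hN n hn
      have haln : (0:ℝ) < al n := by linarith
      have hble : Real.log ‖w n‖ ≤ (Nat.ceil (max b 0) : ℝ) * al n := by
        have h2 : Real.log ‖w n‖ ≤ b * al n := by
          rw [div_le_iff₀ haln] at hlog; linarith
        nlinarith [le_max_left b 0]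
      rcases eq_or_lt_of_le (norm_nonneg (w n)) with hw0 | hw0
      · rw [← hw0]; positivity
      · have := (Real.log_le_iff_le_exp hw0).mp hble
        nlinarith [Real.exp_pos ((Nat.ceil (max b 0) : ℝ) * al n)]

lemma quot_bound {al : ℕ → ℝ} (hal : IsExponentSeq al)
    (hquot : IsBoundedUnder (· ≤ ·) atTop fun n => al (n + 1) / al n) :
    ∃ (R : ℝ) (N : ℕ), 1 ≤ R ∧ ∀ n, N ≤ n → al (n+1) ≤ R * al n ∧ 1 ≤ al n := by
  obtain ⟨R₀, hR₀⟩ := hquot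
  rw [eventually_map] at hR₀
  have h1 : ∀ᶠ n in atTop, 1 ≤ al n := hal.2.2.eventually_ge_atTop 1
  obtain ⟨N, hN⟩ := eventually_atTop.mp (hR₀.and h1)
  refine ⟨max R₀ 1, N, le_max_right _ _, fun n hn => ?_⟩
  obtain ⟨hq, hal1⟩ := hN n hn
  have haln : (0:ℝ) < al n := by linarith
  constructor
  · rw [div_le_iff₀ haln] at hq
    nlinarith [le_max_left R₀ (1:ℝ)]
  · exact hal1

lemma exp_lt_of_lt_log {c x : ℝ} (hx : 0 ≤ x) (hc : 0 ≤ c) (h : c < Real.log x) :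
    Real.exp c < x := by
  rcases eq_or_lt_of_le hx with hx0 | hx0
  · rw [← hx0, Real.log_zero] at h; linarith
  · exact (Real.lt_log_iff_exp_lt hx0).mp h

lemma extract {al : ℕ → ℝ} (hal : IsExponentSeq al) (w : ℕ → 𝕜)
    (hnot : ¬ IsBoundedUnder (· ≤ ·) atTop fun n => Real.log ‖w n‖ / al n)
    (b : ℕ → ℝ) (hb : ∀ j, 0 ≤ b j) (N : ℕ) :
    ∃ φ : ℕ → ℕ, StrictMono φ ∧ ∀ j, N ≤ φ j ∧ 1 ≤ φ j ∧ 1 ≤ al (φ j) ∧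
      1 ≤ al (φ j - 1) ∧ Real.exp (b j * al (φ j)) < ‖w (φ j)‖ := by
  have hfreq : ∀ c : ℝ, ∃ᶠ n in atTop, c < Real.log ‖w n‖ / al n := by
    intro c
    by_contra hcon
    rw [not_frequently] at hcon
    exact hnot ⟨c, eventually_map.mpr (hcon.mono fun n hn => not_lt.mp hn)⟩
  have h1 : ∀ᶠ n in atTop, 1 ≤ al n := hal.2.2.eventually_ge_atTop 1
  obtain ⟨M, hM⟩ := eventually_atTop.mp h1
  have hev : ∀ᶠ n in atTop, N ≤ n ∧ 1 ≤ n ∧ 1 ≤ al n ∧ 1 ≤ al (n - 1) := by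
    filter_upwards [eventually_ge_atTop N, eventually_ge_atTop (M+1), h1] with n hn1 hn2 hn3
    exact ⟨hn1, by omega, hn3, hM _ (by omega)⟩
  have hP : ∀ j : ℕ, ∃ᶠ n in atTop, (N ≤ n ∧ 1 ≤ n ∧ 1 ≤ al n ∧
      1 ≤ al (n - 1) ∧ Real.exp (b j * al n) < ‖w n‖) := by
    intro j
    apply ((hfreq (b j)).and_eventually hev).mono
    rintro n ⟨hlog, hn1, hn2, hn3, hn4⟩
    have haln : (0:ℝ) < al n := by linarith
    have hlt : b j * al n < Real.log ‖w n‖ := (lt_div_iff₀ haln).mp hlog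
    have hc : 0 ≤ b j * al n := mul_nonneg (hb j) haln.le
    exact ⟨hn1, hn2, hn3, hn4, exp_lt_of_lt_log (norm_nonneg _) hc hlt⟩
  obtain ⟨φ, hφ, hφP⟩ := extraction_forall_of_frequently hP
  exact ⟨φ, hφ, hφP⟩

lemma geom_aux (k : ℕ) :
    Summable fun j : ℕ => Real.exp ((k : ℝ) - (j + (k+1) : ℕ)) := by
  have hr1 : Real.exp (-1 : ℝ) < 1 := by
    rw [← Real.exp_zero]; exact Real.exp_lt_exp.mpr (by norm_num)
  have hle : ∀ j : ℕ, Real.exp ((k : ℝ) - (j + (k+1) : ℕ)) ≤ Real.exp (-1:ℝ) ^ j := by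
    intro j
    rw [← Real.exp_nat_mul]
    apply Real.exp_le_exp.mpr
    push_cast
    nlinarith
  exact Summable.of_nonneg_of_le (fun j => (Real.exp_pos _).le) hle
    (summable_geometric_of_lt_one (Real.exp_pos _).le hr1)

lemma not_bounded_B {al : ℕ → ℝ} (hal : IsExponentSeq al)
    (hquot : IsBoundedUnder (· ≤ ·) atTop fun n => al (n + 1) / al n) {w : ℕ → 𝕜}
    (hmap : MapsLambda (AInf al) L1 (Bshift w)) :
    IsBoundedUnder (· ≤ ·) atTop fun n => Real.log ‖w n‖ / al n := by
  by_contra hnot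
  obtain ⟨R, N, hR1, hRN⟩ := quot_bound hal hquot
  obtain ⟨φ, hφ, hP⟩ := extract hal w hnot (fun j => j * R + j + 1)
    (fun j => by
      have hj : (0:ℝ) ≤ (j:ℝ) := Nat.cast_nonneg j
      show (0:ℝ) ≤ (j:ℝ) * R + (j:ℝ) + 1
      nlinarith) N
  classical
  set x : ℕ → 𝕜 := fun m => if h : ∃ j, φ j + 1 = m then
      ((Real.exp (-(↑h.choose * R) * al (φ h.choose)) : ℝ) : 𝕜) else 0 with hxdef
  have hinj : Function.Injective fun j => φ j + 1 := by
    intro i j h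
    simp only [add_left_inj] at h
    exact hφ.injective h
  have hx_eval : ∀ j, x (φ j + 1) = ((Real.exp (-(↑j * R) * al (φ j)) : ℝ) : 𝕜) := by
    intro j
    have h : ∃ j', φ j' + 1 = φ j + 1 := ⟨j, rfl⟩
    have hc : h.choose = j := hinj h.choose_spec
    rw [hxdef]
    simp only [dif_pos h, hc]
  have hx_zero : ∀ m, m ∉ Set.range (fun j => φ j + 1) → x m = 0 := by
    intro m hm
    rw [hxdef]
    apply dif_neg
    rintro ⟨j, hj⟩
    exact hm ⟨j, hj⟩
  have hmem : MemLambda (AInf al) L1 x := by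
    rw [memL1_iff]
    intro k
    apply (hinj.summable_iff ?_).mp
    · show Summable fun j => ‖x (φ j + 1)‖ * AInf al (φ j + 1) k
      have key : ∀ j : ℕ, k + 1 ≤ j →
          ‖x (φ j + 1)‖ * AInf al (φ j + 1) k ≤ Real.exp ((k : ℝ) - j) := by
        intro j hj
        rw [hx_eval j]
        rw [RCLike.norm_ofReal, Real.abs_exp, AInf, ← Real.exp_add]
        apply Real.exp_le_exp.mpr
        have h1 : al (φ j + 1) ≤ R * al (φ j) := (hRN _ (hP j).1).1
        have h2 : 1 ≤ al (φ j) := (hP j).2.2.1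
        have h3 : (0:ℝ) ≤ (k:ℝ) := Nat.cast_nonneg k
        have hkj : (k:ℝ) - j ≤ -1 := by
          have : (k:ℝ) + 1 ≤ j := by exact_mod_cast hj
          linarith
        have e1 : -(↑j * R) * al (φ j) + (k:ℝ) * al (φ j + 1) ≤
            ((k:ℝ) - j) * (R * al (φ j)) := by nlinarith
        have e2 : ((k:ℝ) - j) * (R * al (φ j)) ≤ ((k:ℝ) - j) * 1 := by
          apply mul_le_mul_of_nonpos_left ?_ (by linarith)
          nlinarith
        linarith
      rw [← summable_nat_add_iff (k+1)]
      apply Summable.of_nonneg_of_le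
        (fun j => mul_nonneg (norm_nonneg _) (Real.exp_pos _).le)
        (fun j => key (j + (k+1)) (by omega))
      · exact geom_aux k
    · intro m hm
      rw [hx_zero m hm, norm_zero, zero_mul]
  have hBx := (memL1_iff _ _).mp (hmap x hmem) 0
  have htend : Tendsto (fun j => ‖Bshift w x (φ j)‖ * AInf al (φ j) 0) atTop (nhds 0) :=
    hBx.tendsto_atTop_zero.comp hφ.tendsto_atTop
  have hlarge : ∀ j, (1:ℝ) ≤ ‖Bshift w x (φ j)‖ * AInf al (φ j) 0 := by
    intro j
    have hw := (hP j).2.2.2.2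
    have h2 : 1 ≤ al (φ j) := (hP j).2.2.1
    simp only [Bshift, AInf, Nat.cast_zero, zero_mul, Real.exp_zero, mul_one,
      norm_mul, hx_eval, RCLike.norm_ofReal, Real.abs_exp]
    have hstep : Real.exp ((↑j * R + ↑j + 1) * al (φ j)) *
        Real.exp (-(↑j * R) * al (φ j)) ≤
        ‖w (φ j)‖ * Real.exp (-(↑j * R) * al (φ j)) :=
      mul_le_mul_of_nonneg_right hw.le (Real.exp_pos _).le
    rw [← Real.exp_add] at hstep
    have hexp : (1:ℝ) ≤ Real.exp ((↑j * R + ↑j + 1) * al (φ j) + -(↑j * R) * al (φ j)) := by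
      apply Real.one_le_exp
      have h3 : (0:ℝ) ≤ (j:ℝ) := Nat.cast_nonneg j
      nlinarith
    linarith
  have : (1:ℝ) ≤ 0 := ge_of_tendsto htend (Eventually.of_forall hlarge)
  linarith

lemma not_bounded_F {al : ℕ → ℝ} (hal : IsExponentSeq al) {w : ℕ → 𝕜}
    (hmap : MapsLambda (AInf al) L1 (Fshift w)) :
    IsBoundedUnder (· ≤ ·) atTop fun n => Real.log ‖w n‖ / al n := by
  by_contra hnot
  obtain ⟨φ, hφ, hP⟩ := extract hal w hnot (fun j => j + 1)
    (fun j => by positivity) 0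
  classical
  set x : ℕ → 𝕜 := fun m => if h : ∃ j, φ j - 1 = m then
      ((Real.exp (-(↑h.choose) * al (φ h.choose - 1)) : ℝ) : 𝕜) else 0 with hxdef
  have hinj : Function.Injective fun j => φ j - 1 := by
    intro i j h
    simp only [] at h
    have hi : 1 ≤ φ i := (hP i).2.1
    have hj : 1 ≤ φ j := (hP j).2.1
    exact hφ.injective (by omega)
  have hx_eval : ∀ j, x (φ j - 1) = ((Real.exp (-(↑j) * al (φ j - 1)) : ℝ) : 𝕜) := by
    intro j
    have h : ∃ j', φ j' - 1 = φ j - 1 := ⟨j, rfl⟩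
    have hc : h.choose = j := hinj h.choose_spec
    rw [hxdef]
    simp only [dif_pos h, hc]
  have hx_zero : ∀ m, m ∉ Set.range (fun j => φ j - 1) → x m = 0 := by
    intro m hm
    rw [hxdef]
    apply dif_neg
    rintro ⟨j, hj⟩
    exact hm ⟨j, hj⟩
  have hmem : MemLambda (AInf al) L1 x := by
    rw [memL1_iff]
    intro k
    apply (hinj.summable_iff ?_).mp
    · show Summable fun j => ‖x (φ j - 1)‖ * AInf al (φ j - 1) k
      have key : ∀ j : ℕ, k + 1 ≤ j →
          ‖x (φ j - 1)‖ * AInf al (φ j - 1) k ≤ Real.exp ((k : ℝ) - j) := by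
        intro j hj
        rw [hx_eval j]
        rw [RCLike.norm_ofReal, Real.abs_exp, AInf, ← Real.exp_add]
        apply Real.exp_le_exp.mpr
        have h2 : 1 ≤ al (φ j - 1) := (hP j).2.2.2.1
        have hkj : (k:ℝ) - j ≤ -1 := by
          have : (k:ℝ) + 1 ≤ j := by exact_mod_cast hj
          linarith
        have e2 : ((k:ℝ) - j) * al (φ j - 1) ≤ ((k:ℝ) - j) * 1 := by
          apply mul_le_mul_of_nonpos_left h2 (by linarith)
        nlinarith
      rw [← summable_nat_add_iff (k+1)]
      apply Summable.of_nonneg_of_le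
        (fun j => mul_nonneg (norm_nonneg _) (Real.exp_pos _).le)
        (fun j => key (j + (k+1)) (by omega))
      · exact geom_aux k
    · intro m hm
      rw [hx_zero m hm, norm_zero, zero_mul]
  have hFx := (memL1_iff _ _).mp (hmap x hmem) 0
  have htend : Tendsto (fun j => ‖Fshift w x (φ j)‖ * AInf al (φ j) 0) atTop (nhds 0) :=
    hFx.tendsto_atTop_zero.comp hφ.tendsto_atTop
  have hlarge : ∀ j, (1:ℝ) ≤ ‖Fshift w x (φ j)‖ * AInf al (φ j) 0 := by
    intro j
    have hw := (hP j).2.2.2.2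
    have h2 : 1 ≤ al (φ j) := (hP j).2.2.1
    have hmono : al (φ j - 1) ≤ al (φ j) := hal.1 (by omega)
    have hj1 : φ j ≠ 0 := by have := (hP j).2.1; omega
    have hF : Fshift w x (φ j) = w (φ j) * x (φ j - 1) := by
      simp only [Fshift, if_neg hj1]
    rw [hF]
    simp only [AInf, Nat.cast_zero, zero_mul, Real.exp_zero, mul_one,
      norm_mul, hx_eval, RCLike.norm_ofReal, Real.abs_exp]
    have hstep : Real.exp ((↑j + 1) * al (φ j)) * Real.exp (-(↑j) * al (φ j - 1)) ≤
        ‖w (φ j)‖ * Real.exp (-(↑j) * al (φ j - 1)) :=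
      mul_le_mul_of_nonneg_right hw.le (Real.exp_pos _).le
    rw [← Real.exp_add] at hstep
    have hexp : (1:ℝ) ≤ Real.exp ((↑j + 1) * al (φ j) + -(↑j) * al (φ j - 1)) := by
      apply Real.one_le_exp
      have h3 : (0:ℝ) ≤ (j:ℝ) := Nat.cast_nonneg j
      nlinarith
    linarith
  have : (1:ℝ) ≤ 0 := ge_of_tendsto htend (Eventually.of_forall hlarge)
  linarith

lemma contB {al : ℕ → ℝ} (hal : IsExponentSeq al) {w : ℕ → 𝕜}
    (h : IsBoundedUnder (· ≤ ·) atTop fun n => Real.log ‖w n‖ / al n) :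
    ContinuousOnLambda (AInf al) L1 (Bshift w) := by
  obtain ⟨L, C, hC, hw⟩ := weight_bound hal h
  have hterm : ∀ (k : ℕ) (x : ℕ → 𝕜) (n : ℕ),
      ‖Bshift w x n‖ * AInf al n k ≤ C * (‖x (n+1)‖ * AInf al (n+1) (k+L)) := by
    intro k x n
    show ‖w n * x (n+1)‖ * Real.exp (↑k * al n) ≤
      C * (‖x (n+1)‖ * Real.exp (↑(k+L) * al n.succ))
    rw [norm_mul]
    have h1 : Real.exp (↑k * al n) * Real.exp (↑L * al n) ≤ Real.exp (↑(k+L) * al n.succ) := by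
      rw [← Real.exp_add]
      apply Real.exp_le_exp.mpr
      have hm := hal.1 (Nat.le_succ n)
      have hk : (0:ℝ) ≤ (k:ℝ) := Nat.cast_nonneg k
      have hL : (0:ℝ) ≤ (L:ℝ) := Nat.cast_nonneg L
      push_cast
      nlinarith
    calc ‖w n‖ * ‖x (n+1)‖ * Real.exp (↑k * al n)
        ≤ (C * Real.exp (↑L * al n)) * (‖x (n+1)‖ * Real.exp (↑k * al n)) := by
          rw [← mul_assoc]
          apply mul_le_mul_of_nonneg_right _ (Real.exp_pos _).le
          exact mul_le_mul_of_nonneg_right (hw n) (norm_nonneg _)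
      _ = (C * ‖x (n+1)‖) * (Real.exp (↑k * al n) * Real.exp (↑L * al n)) := by ring
      _ ≤ (C * ‖x (n+1)‖) * Real.exp (↑(k+L) * al n.succ) := by
          apply mul_le_mul_of_nonneg_left h1
          exact mul_nonneg (by linarith) (norm_nonneg _)
      _ = C * (‖x (n+1)‖ * Real.exp (↑(k+L) * al n.succ)) := by ring
  have hmaps : MapsLambda (AInf al) L1 (Bshift w) := by
    intro x hx
    rw [memL1_iff] at hx ⊢
    intro k
    have hs : Summable fun n => C * (‖x (n+1)‖ * AInf al (n+1) (k+L)) :=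
      ((summable_nat_add_iff 1).mpr (hx (k+L))).mul_left C
    exact Summable.of_nonneg_of_le
      (fun n => mul_nonneg (norm_nonneg _) (Real.exp_pos _).le) (hterm k x) hs
  refine ⟨hmaps, fun k => ⟨k+L, C, by linarith, fun x hx => ?_⟩⟩
  rw [semi_eq, semi_eq]
  have hx' := (memL1_iff _ _).mp hx
  have hs : Summable fun n => C * (‖x (n+1)‖ * AInf al (n+1) (k+L)) :=
    ((summable_nat_add_iff 1).mpr (hx' (k+L))).mul_left C
  calc ∑' n, ‖Bshift w x n‖ * AInf al n k
      ≤ ∑' n, C * (‖x (n+1)‖ * AInf al (n+1) (k+L)) :=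
        Summable.tsum_le_tsum (hterm k x) ((memL1_iff _ _).mp (hmaps x hx) k) hs
    _ = C * ∑' n, ‖x (n+1)‖ * AInf al (n+1) (k+L) := tsum_mul_left
    _ ≤ C * ∑' n, ‖x n‖ * AInf al n (k+L) := by
        apply mul_le_mul_of_nonneg_left _ (by linarith)
        rw [Summable.tsum_eq_zero_add (hx' (k+L))]
        exact le_add_of_nonneg_left (mul_nonneg (norm_nonneg _) (Real.exp_pos _).le)

lemma contF {al : ℕ → ℝ} (hal : IsExponentSeq al)
    (hquot : IsBoundedUnder (· ≤ ·) atTop fun n => al (n + 1) / al n) {w : ℕ → 𝕜}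
    (h : IsBoundedUnder (· ≤ ·) atTop fun n => Real.log ‖w n‖ / al n) :
    ContinuousOnLambda (AInf al) L1 (Fshift w) := by
  obtain ⟨L, C, hC, hw⟩ := weight_bound hal h
  obtain ⟨R, N, hR1, hRN⟩ := quot_bound hal hquot
  -- for each k, choose M and C₂
  have hkey : ∀ k : ℕ, ∃ (M : ℕ) (C₂ : ℝ), 1 ≤ C₂ ∧ ∀ n : ℕ, 1 ≤ n →
      Real.exp (↑(k+L) * al n) ≤ C₂ * Real.exp (↑M * al (n-1)) := by
    intro k
    refine ⟨Nat.ceil (((k+L : ℕ) : ℝ) * R), Real.exp (↑(k+L) * al N), ?_, ?_⟩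
    · apply Real.one_le_exp
      exact mul_nonneg (Nat.cast_nonneg _) (hal.2.1 N)
    · intro n hn
      have hM : ((k+L : ℕ) : ℝ) * R ≤ (Nat.ceil (((k+L : ℕ) : ℝ) * R) : ℝ) := Nat.le_ceil _
      have hexp2 : (1:ℝ) ≤ Real.exp (↑(Nat.ceil (((k+L : ℕ) : ℝ) * R)) * al (n-1)) :=
        Real.one_le_exp (mul_nonneg (Nat.cast_nonneg _) (hal.2.1 _))
      rcases lt_or_ge n (N+1) with hnN | hnN
      · have hmono : al n ≤ al N := hal.1 (by omega)
        have h1 : Real.exp (↑(k+L) * al n) ≤ Real.exp (↑(k+L) * al N) := by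
          apply Real.exp_le_exp.mpr
          exact mul_le_mul_of_nonneg_left hmono (Nat.cast_nonneg _)
        nlinarith [Real.exp_pos (↑(k+L) * al N)]
      · have hq := hRN (n-1) (by omega)
        have hq1 : al n ≤ R * al (n-1) := by
          have := hq.1
          rwa [Nat.sub_add_cancel (by omega)] at this
        have h1 : Real.exp (↑(k+L) * al n) ≤
            Real.exp (↑(Nat.ceil (((k+L : ℕ) : ℝ) * R)) * al (n-1)) := by
          apply Real.exp_le_exp.mpr
          have hk : (0:ℝ) ≤ ((k+L : ℕ) : ℝ) := Nat.cast_nonneg _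
          have hal0 : 0 ≤ al (n-1) := hal.2.1 _
          nlinarith
        have hC2 : (1:ℝ) ≤ Real.exp (↑(k+L) * al N) :=
          Real.one_le_exp (mul_nonneg (Nat.cast_nonneg _) (hal.2.1 N))
        nlinarith [Real.exp_pos (↑(Nat.ceil (((k+L : ℕ) : ℝ) * R)) * al (n-1))]
  choose M C₂ hC₂ hMC using hkey
  have hterm : ∀ (k : ℕ) (x : ℕ → 𝕜) (n : ℕ),
      ‖Fshift w x n‖ * AInf al n k ≤
        (C * C₂ k) * (if n = 0 then 0 else ‖x (n-1)‖ * AInf al (n-1) (M k)) := by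
    intro k x n
    rcases Nat.eq_zero_or_pos n with hn0 | hn0
    · subst hn0
      simp [Fshift, AInf]
    · rw [if_neg (by omega)]
      show ‖Fshift w x n‖ * Real.exp (↑k * al n) ≤
        (C * C₂ k) * (‖x (n-1)‖ * Real.exp (↑(M k) * al (n-1)))
      have hF : Fshift w x n = w n * x (n-1) := by
        simp only [Fshift, if_neg (by omega : ¬ n = 0)]
      rw [hF, norm_mul]
      have h1 : Real.exp (↑k * al n) * Real.exp (↑L * al n) = Real.exp (↑(k+L) * al n) := by
        rw [← Real.exp_add]
        congr 1
        push_cast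
        ring
      have h2 := hMC k n hn0
      calc ‖w n‖ * ‖x (n-1)‖ * Real.exp (↑k * al n)
          ≤ (C * Real.exp (↑L * al n)) * (‖x (n-1)‖ * Real.exp (↑k * al n)) := by
            rw [← mul_assoc]
            apply mul_le_mul_of_nonneg_right _ (Real.exp_pos _).le
            exact mul_le_mul_of_nonneg_right (hw n) (norm_nonneg _)
        _ = (C * ‖x (n-1)‖) * (Real.exp (↑k * al n) * Real.exp (↑L * al n)) := by ring
        _ = (C * ‖x (n-1)‖) * Real.exp (↑(k+L) * al n) := by rw [h1]
        _ ≤ (C * ‖x (n-1)‖) * (C₂ k * Real.exp (↑(M k) * al (n-1))) := by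
            apply mul_le_mul_of_nonneg_left h2
            exact mul_nonneg (by linarith) (norm_nonneg _)
        _ = (C * C₂ k) * (‖x (n-1)‖ * Real.exp (↑(M k) * al (n-1))) := by ring
  have hsum : ∀ (k : ℕ) (x : ℕ → 𝕜), MemLambda (AInf al) L1 x →
      Summable fun n : ℕ => if n = 0 then 0 else ‖x (n-1)‖ * AInf al (n-1) (M k) := by
    intro k x hx
    rw [← summable_nat_add_iff 1]
    have : (fun n : ℕ => if n + 1 = 0 then (0:ℝ) else ‖x (n+1-1)‖ * AInf al (n+1-1) (M k))
        = fun n => ‖x n‖ * AInf al n (M k) := by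
      funext n
      simp
    rw [this]
    exact (memL1_iff _ _).mp hx (M k)
  have hmaps : MapsLambda (AInf al) L1 (Fshift w) := by
    intro x hx
    rw [memL1_iff]
    intro k
    apply Summable.of_nonneg_of_le
      (fun n => mul_nonneg (norm_nonneg _) (Real.exp_pos _).le) (hterm k x)
    exact (hsum k x hx).mul_left _
  have hCC : ∀ k, 0 < C * C₂ k := fun k => mul_pos (by linarith) (by linarith [hC₂ k])
  refine ⟨hmaps, fun k => ⟨M k, C * C₂ k, hCC k, fun x hx => ?_⟩⟩
  rw [semi_eq, semi_eq]
  have hgs := hsum k x hx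
  calc ∑' n, ‖Fshift w x n‖ * AInf al n k
      ≤ ∑' n, (C * C₂ k) * (if n = 0 then 0 else ‖x (n-1)‖ * AInf al (n-1) (M k)) :=
        Summable.tsum_le_tsum (hterm k x) ((memL1_iff _ _).mp (hmaps x hx) k) (hgs.mul_left _)
    _ = (C * C₂ k) * ∑' n, (if n = 0 then (0:ℝ) else ‖x (n-1)‖ * AInf al (n-1) (M k)) :=
        tsum_mul_left
    _ ≤ (C * C₂ k) * ∑' n, ‖x n‖ * AInf al n (M k) := by
        apply mul_le_mul_of_nonneg_left _ (hCC k).le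
        rw [Summable.tsum_eq_zero_add hgs]
        have h0 : (if (0:ℕ) = 0 then (0:ℝ) else ‖x (0-1)‖ * AInf al (0-1) (M k)) = 0 := by
          simp
        rw [h0, zero_add]
        apply le_of_eq
        apply tsum_congr
        intro n
        simp
  
end Stmt1Aux

/-- Corollary 2.2 (a): on `Λ_∞(α)`, for `α` with `limsup α_{n+1}/α_n < ∞`, correct definedness
and continuity of `B_w` and `F_w` are all equivalent to `limsup (ln |w_n|)/α_n < ∞`. -/
theorem statement1 {𝕜 : Type*} [RCLike 𝕜] (al : ℕ → ℝ) (hal : IsExponentSeq al)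
    (hquot : IsBoundedUnder (· ≤ ·) atTop fun n => al (n + 1) / al n) (w : ℕ → 𝕜) :
    [MapsLambda (AInf al) L1 (Bshift w),
     ContinuousOnLambda (AInf al) L1 (Bshift w),
     MapsLambda (AInf al) L1 (Fshift w),
     ContinuousOnLambda (AInf al) L1 (Fshift w),
     IsBoundedUnder (· ≤ ·) atTop fun n => Real.log ‖w n‖ / al n].TFAE := by
  tfae_have 2 → 1 := fun h => h.1
  tfae_have 4 → 3 := fun h => h.1
  tfae_have 5 → 2 := fun h => contB hal h
  tfae_have 5 → 4 := fun h => contF hal hquot h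
  tfae_have 1 → 5 := fun h => not_bounded_B hal hquot h
  tfae_have 3 → 5 := fun h => not_bounded_F hal h
  tfae_finish
end
end

section
/- Let A be a Köthe matrix, p ∈ [1,∞] ∪ {0}, and w ∈ 𝕂^{ℕ₀} such that B_w is continuous on λ_p(A). Then B_w is topologizable on λ_p(A) if and only if for every k ∈ ℕ₀ there is l ∈ ℕ₀ such that for each m ∈ ℕ₀ one has sup_{n∈ℕ₀} ( (∏_{j=0}^{m−1} |w_{n+j}|) · a_{n,k} ) / a_{n+m,l} < ∞. -/
open Filter Finset
open scoped ENNReal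

noncomputable section

variable {𝕜 : Type*} [RCLike 𝕜]

lemma bshiftIter (w : ℕ → 𝕜) (x : ℕ → 𝕜) (m i : ℕ) :
    (Bshift w)^[m] x i = (∏ j ∈ range m, w (i + j)) * x (i + m) := by
  induction m generalizing x with
  | zero => simp
  | succ m ih =>
    rw [Function.iterate_succ_apply, ih]
    show (∏ j ∈ range m, w (i + j)) * (w (i + m) * x (i + m + 1)) = _
    rw [prod_range_succ, mul_assoc]
    simp [Nat.add_assoc]

lemma memLambda_single (a : ℕ → ℕ → ℝ) (P : PIndex) (j : ℕ) (c : 𝕜) :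
    MemLambda a P (fun n => if n = j then c else 0) := by
  cases P with
  | lp p hp =>
    have hp0 : p ≠ 0 := (zero_lt_one.trans_le hp).ne'
    intro k
    apply summable_of_ne_finset_zero (s := {j})
    intro n hn
    simp only [Finset.mem_singleton] at hn
    simp [hn, Real.zero_rpow hp0]
  | linf =>
    intro k
    refine ⟨max (‖c‖ * a j k) 0, ?_⟩
    rintro _ ⟨n, rfl⟩
    by_cases h : n = j
    · subst h; simp [le_max_left]
    · simp [h, le_max_right]
  | lzero =>
    intro k
    apply Filter.Tendsto.congr' (f₁ := fun _ => (0 : ℝ)) ?_ tendsto_const_nhds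
    filter_upwards [Filter.eventually_ge_atTop (j + 1)] with n hn
    have h : n ≠ j := by omega
    simp [h]

lemma iSup_ite_eq_real (j : ℕ) (v : ℝ) (hv : 0 ≤ v) :
    (⨆ n : ℕ, if n = j then v else 0) = v := by
  apply le_antisymm
  · exact ciSup_le fun n => by by_cases h : n = j <;> simp [h, hv]
  · have hb : BddAbove (Set.range fun n : ℕ => if n = j then v else 0) := by
      refine ⟨max v 0, ?_⟩
      rintro _ ⟨n, rfl⟩
      dsimp only
      split_ifs <;> simp
    have := le_ciSup hb j
    simpa using this

lemma seminorm_single (a : ℕ → ℕ → ℝ) (P : PIndex) (k j : ℕ) (c : 𝕜) (h0 : 0 ≤ a j k) :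
    lambdaSeminorm a P k (fun n => if n = j then c else 0) = ‖c‖ * a j k := by
  have hv : 0 ≤ ‖c‖ * a j k := mul_nonneg (norm_nonneg c) h0
  cases P with
  | lp p hp =>
    have hp0 : (0 : ℝ) < p := zero_lt_one.trans_le hp
    have hfun : (fun n => (‖(if n = j then c else 0 : 𝕜)‖ * a n k) ^ p)
        = fun n => if n = j then (‖c‖ * a j k) ^ p else 0 := by
      funext n; by_cases h : n = j <;> simp [h, Real.zero_rpow hp0.ne']
    simp only [lambdaSeminorm, hfun, tsum_ite_eq]
    rw [one_div, Real.rpow_rpow_inv hv hp0.ne']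
  | linf =>
    have hfun : (fun n => ‖(if n = j then c else 0 : 𝕜)‖ * a n k)
        = fun n => if n = j then ‖c‖ * a j k else 0 := by
      funext n; by_cases h : n = j <;> simp [h]
    simp only [lambdaSeminorm, hfun]
    exact iSup_ite_eq_real j _ hv
  | lzero =>
    have hfun : (fun n => ‖(if n = j then c else 0 : 𝕜)‖ * a n k)
        = fun n => if n = j then ‖c‖ * a j k else 0 := by
      funext n; by_cases h : n = j <;> simp [h]
    simp only [lambdaSeminorm, hfun]
    exact iSup_ite_eq_real j _ hv


/-- Proposition 3.1 (a): characterization of topologizability of the weighted backward shift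
`B_w` on `λ_p(A)` (the conventions `0/0 = 0`, `c/0 = ∞` for `c > 0` are built into `ℝ≥0∞`). -/
theorem statement3 {𝕜 : Type*} [RCLike 𝕜] (a : ℕ → ℕ → ℝ) (ha : IsKoetheMatrix a)
    (P : PIndex) (w : ℕ → 𝕜) (hc : ContinuousOnLambda a P (Bshift w)) :
    TopologizableOnLambda a P (Bshift w) ↔
      ∀ k : ℕ, ∃ l : ℕ, ∀ m : ℕ,
        (⨆ n : ℕ, ENNReal.ofReal ((∏ j ∈ range m, ‖w (n + j)‖) * a n k) /
          ENNReal.ofReal (a (n + m) l)) < ⊤ := by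
  have hA0 : ∀ n k, 0 ≤ a n k := ha.1
  have hAm : ∀ n : ℕ, Monotone (a n) := fun n => monotone_nat_of_le_succ fun k => ha.2.1 n k
  constructor
  · -- topologizable → condition
    intro htop k
    obtain ⟨l, hl⟩ := htop k
    refine ⟨max l k, fun m => ?_⟩
    rcases Nat.eq_zero_or_pos m with hm | hm
    · subst hm
      refine lt_of_le_of_lt (iSup_le fun n => ?_) (by norm_num : (1 : ℝ≥0∞) < ⊤)
      apply ENNReal.div_le_of_le_mul
      rw [one_mul]
      simp only [range_zero, prod_empty, one_mul, Nat.add_zero]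
      exact ENNReal.ofReal_le_ofReal (hAm n (le_max_right l k))
    · obtain ⟨γ, hγ, hb⟩ := hl m hm
      refine lt_of_le_of_lt (iSup_le fun n => ?_) (show ENNReal.ofReal γ < ⊤ from ENNReal.ofReal_lt_top)
      apply ENNReal.div_le_of_le_mul
      have hkey := hb _ (memLambda_single (𝕜 := 𝕜) a P (n + m) 1)
      have hiter : (Bshift w)^[m] (fun i => if i = n + m then (1 : 𝕜) else 0)
          = fun i => if i = n then (∏ j ∈ range m, w (n + j)) else 0 := by
        funext i
        rw [bshiftIter]
        by_cases h : i = n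
        · subst h; simp
        · have h2 : i + m ≠ n + m := fun hc => h (Nat.add_right_cancel hc)
          simp [h, h2]
      rw [hiter, seminorm_single a P k n _ (hA0 n k),
          seminorm_single a P l (n + m) _ (hA0 _ l), norm_one, one_mul, norm_prod] at hkey
      calc ENNReal.ofReal ((∏ j ∈ range m, ‖w (n + j)‖) * a n k)
          ≤ ENNReal.ofReal (γ * a (n + m) (max l k)) :=
            ENNReal.ofReal_le_ofReal
              (hkey.trans (mul_le_mul_of_nonneg_left (hAm _ (le_max_left l k)) hγ.le))
        _ = ENNReal.ofReal γ * ENNReal.ofReal (a (n + m) (max l k)) := ENNReal.ofReal_mul hγ.le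
  · -- condition → topologizable
    intro h k
    obtain ⟨l, hl⟩ := h k
    refine ⟨l, fun m _ => ?_⟩
    set S : ℝ≥0∞ := ⨆ n : ℕ, ENNReal.ofReal ((∏ j ∈ range m, ‖w (n + j)‖) * a n k) /
      ENNReal.ofReal (a (n + m) l) with hSdef
    have hS : S < ⊤ := hl m
    set C : ℝ := S.toReal with hCdef
    have hC0 : 0 ≤ C := ENNReal.toReal_nonneg
    have key : ∀ n, (∏ j ∈ range m, ‖w (n + j)‖) * a n k ≤ (C + 1) * a (n + m) l := by
      intro n
      have hterm : ENNReal.ofReal ((∏ j ∈ range m, ‖w (n + j)‖) * a n k) /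
          ENNReal.ofReal (a (n + m) l) ≤ ENNReal.ofReal C := by
        rw [hCdef, ENNReal.ofReal_toReal hS.ne]
        exact hSdef ▸ le_iSup (fun n => ENNReal.ofReal ((∏ j ∈ range m, ‖w (n + j)‖) * a n k) /
          ENNReal.ofReal (a (n + m) l)) n
      have hnum0 : 0 ≤ (∏ j ∈ range m, ‖w (n + j)‖) * a n k :=
        mul_nonneg (Finset.prod_nonneg fun _ _ => norm_nonneg _) (hA0 n k)
      by_cases hden : a (n + m) l ≤ 0
      · have hden0 : a (n + m) l = 0 := le_antisymm hden (hA0 _ _)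
        rw [hden0, mul_zero]
        by_contra hcon
        push_neg at hcon
        have hne : ENNReal.ofReal ((∏ j ∈ range m, ‖w (n + j)‖) * a n k) ≠ 0 := by
          simp only [ne_eq, ENNReal.ofReal_eq_zero, not_le]
          exact hcon
        rw [hden0, ENNReal.ofReal_zero, ENNReal.div_zero hne] at hterm
        exact absurd hterm (by simp)
      · push_neg at hden
        have h1 : ENNReal.ofReal ((∏ j ∈ range m, ‖w (n + j)‖) * a n k)
            ≤ ENNReal.ofReal C * ENNReal.ofReal (a (n + m) l) :=
          (ENNReal.div_le_iff (by simp [hden]) ENNReal.ofReal_ne_top).1 hterm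
        rw [← ENNReal.ofReal_mul hC0] at h1
        have h2 := (ENNReal.ofReal_le_ofReal_iff (by positivity)).1 h1
        nlinarith [hA0 (n + m) l]
    refine ⟨C + 1, by linarith, fun x hx => ?_⟩
    have hbase : ∀ n, ‖(Bshift w)^[m] x n‖ * a n k ≤ (C + 1) * (‖x (n + m)‖ * a (n + m) l) := by
      intro n
      rw [bshiftIter, norm_mul, norm_prod]
      calc (∏ j ∈ range m, ‖w (n + j)‖) * ‖x (n + m)‖ * a n k
            = ‖x (n + m)‖ * ((∏ j ∈ range m, ‖w (n + j)‖) * a n k) := by ring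
        _ ≤ ‖x (n + m)‖ * ((C + 1) * a (n + m) l) :=
            mul_le_mul_of_nonneg_left (key n) (norm_nonneg _)
        _ = (C + 1) * (‖x (n + m)‖ * a (n + m) l) := by ring
    cases P with
    | lp p hp =>
      have hp0 : (0 : ℝ) < p := zero_lt_one.trans_le hp
      have hsum : Summable (fun n => (‖x n‖ * a n l) ^ p) := hx l
      have hsum2 : Summable (fun n => (‖x (n + m)‖ * a (n + m) l) ^ p) :=
        (summable_nat_add_iff m).2 hsum
      have hpt : ∀ n, (‖(Bshift w)^[m] x n‖ * a n k) ^ p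
          ≤ (C + 1) ^ p * (‖x (n + m)‖ * a (n + m) l) ^ p := by
        intro n
        calc (‖(Bshift w)^[m] x n‖ * a n k) ^ p
            ≤ ((C + 1) * (‖x (n + m)‖ * a (n + m) l)) ^ p :=
              Real.rpow_le_rpow (mul_nonneg (norm_nonneg _) (hA0 n k)) (hbase n) hp0.le
          _ = (C + 1) ^ p * (‖x (n + m)‖ * a (n + m) l) ^ p :=
              Real.mul_rpow (by linarith) (mul_nonneg (norm_nonneg _) (hA0 _ _))
      have hsumf : Summable (fun n => (‖(Bshift w)^[m] x n‖ * a n k) ^ p) :=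
        Summable.of_nonneg_of_le
          (fun n => Real.rpow_nonneg (mul_nonneg (norm_nonneg _) (hA0 n k)) p) hpt
          (hsum2.mul_left _)
      have h1 : ∑' n, (‖(Bshift w)^[m] x n‖ * a n k) ^ p
          ≤ (C + 1) ^ p * ∑' n, (‖x n‖ * a n l) ^ p := by
        calc ∑' n, (‖(Bshift w)^[m] x n‖ * a n k) ^ p
            ≤ ∑' n, (C + 1) ^ p * (‖x (n + m)‖ * a (n + m) l) ^ p :=
              Summable.tsum_le_tsum hpt hsumf (hsum2.mul_left _)
          _ = (C + 1) ^ p * ∑' n, (‖x (n + m)‖ * a (n + m) l) ^ p := tsum_mul_left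
          _ ≤ (C + 1) ^ p * ∑' n, (‖x n‖ * a n l) ^ p := by
              refine mul_le_mul_of_nonneg_left ?_ (Real.rpow_nonneg (by linarith) p)
              exact Summable.tsum_le_tsum_of_inj (· + m) (add_left_injective m)
                (fun c _ => Real.rpow_nonneg (mul_nonneg (norm_nonneg _) (hA0 _ _)) p)
                (fun b => le_refl _) hsum2 hsum
      simp only [lambdaSeminorm]
      calc (∑' n, (‖(Bshift w)^[m] x n‖ * a n k) ^ p) ^ (1 / p)
          ≤ ((C + 1) ^ p * ∑' n, (‖x n‖ * a n l) ^ p) ^ (1 / p) :=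
            Real.rpow_le_rpow
              (tsum_nonneg fun n => Real.rpow_nonneg (mul_nonneg (norm_nonneg _) (hA0 n k)) p)
              h1 (by positivity)
        _ = (C + 1) * (∑' n, (‖x n‖ * a n l) ^ p) ^ (1 / p) := by
            rw [Real.mul_rpow (Real.rpow_nonneg (by linarith) p)
              (tsum_nonneg fun n => Real.rpow_nonneg (mul_nonneg (norm_nonneg _) (hA0 _ _)) p),
              one_div, Real.rpow_rpow_inv (by linarith) hp0.ne']
    | linf =>
      have hb : BddAbove (Set.range fun n => ‖x n‖ * a n l) := hx l
      simp only [lambdaSeminorm]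
      refine ciSup_le fun n => (hbase n).trans ?_
      exact mul_le_mul_of_nonneg_left (le_ciSup hb (n + m)) (by linarith)
    | lzero =>
      have hb : BddAbove (Set.range fun n => ‖x n‖ * a n l) := (hx l).bddAbove_range
      simp only [lambdaSeminorm]
      refine ciSup_le fun n => (hbase n).trans ?_
      exact mul_le_mul_of_nonneg_left (le_ciSup hb (n + m)) (by linarith)
end
end

section
/- Let A be a Köthe matrix, p ∈ [1,∞] ∪ {0}, and w ∈ 𝕂^{ℕ₀} such that F_w is continuous on λ_p(A). Then F_w is topologizable on λ_p(A) if and only if for every k ∈ ℕ₀ there is l ∈ ℕ₀ such that for each m ∈ ℕ₀ one has sup_{n∈ℕ₀} ( (∏_{j=1}^{m} |w_{n+j}|) · a_{n+m,k} ) / a_{n,l} < ∞. -/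
open Filter Finset
open scoped ENNReal

noncomputable section

variable {𝕜 : Type*} [RCLike 𝕜]

section Helpers

variable {𝕜 : Type*} [RCLike 𝕜]

/-- The canonical unit vector `e_j`. -/
def eVec (j : ℕ) : ℕ → 𝕜 := fun i => if i = j then 1 else 0

lemma Fshift_iterate (w : ℕ → 𝕜) (m : ℕ) (x : ℕ → 𝕜) :
    (∀ n, (Fshift w)^[m] x (n + m) = (∏ j ∈ Icc 1 m, w (n + j)) * x n) ∧
    (∀ n, n < m → (Fshift w)^[m] x n = 0) := by
  induction m with
  | zero => simp
  | succ m ih =>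
    constructor
    · intro n
      rw [Function.iterate_succ_apply']
      have h0 : n + (m + 1) ≠ 0 := by omega
      have h1 : n + (m + 1) - 1 = n + m := by omega
      simp only [Fshift, h0, if_false, h1, ih.1 n]
      rw [Finset.prod_Icc_succ_top (by omega : 1 ≤ m + 1)]
      ring
    · intro n hn
      rw [Function.iterate_succ_apply']
      by_cases h0 : n = 0
      · simp [Fshift, h0]
      · simp only [Fshift, h0, if_false, ih.2 (n - 1) (by omega), mul_zero]

lemma mem_single (a : ℕ → ℕ → ℝ) (P : PIndex) (y : ℕ → 𝕜) (j : ℕ)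
    (hy : ∀ i ≠ j, y i = 0) : MemLambda a P y := by
  cases P with
  | lp p hp =>
    intro k
    apply summable_of_ne_finset_zero (s := {j})
    intro i hi
    simp only [Finset.mem_singleton] at hi
    rw [hy i hi, norm_zero, zero_mul, Real.zero_rpow (by linarith)]
  | linf =>
    intro k
    refine ⟨‖y j‖ * a j k ⊔ 0, ?_⟩
    rintro r ⟨i, rfl⟩
    show ‖y i‖ * a i k ≤ _
    rcases eq_or_ne i j with rfl | hij
    · exact le_max_left _ _
    · rw [hy i hij, norm_zero, zero_mul]; exact le_max_right _ _
  | lzero =>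
    intro k
    have heq : (fun i => ‖y i‖ * a i k) =ᶠ[atTop] fun _ => (0:ℝ) := by
      filter_upwards [eventually_gt_atTop j] with i hi
      rw [hy i (by omega), norm_zero, zero_mul]
    rw [tendsto_congr' heq]
    exact tendsto_const_nhds

lemma seminorm_single_s4 (a : ℕ → ℕ → ℝ) (ha0 : ∀ n k, 0 ≤ a n k) (P : PIndex) (k : ℕ)
    (y : ℕ → 𝕜) (j : ℕ) (hy : ∀ i ≠ j, y i = 0) :
    lambdaSeminorm a P k y = ‖y j‖ * a j k := by
  have hv : 0 ≤ ‖y j‖ * a j k := mul_nonneg (norm_nonneg _) (ha0 j k)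
  have hsup : (⨆ i, ‖y i‖ * a i k) = ‖y j‖ * a j k := by
    apply le_antisymm
    · apply ciSup_le
      intro i
      rcases eq_or_ne i j with rfl | hij
      · exact le_rfl
      · rw [hy i hij, norm_zero, zero_mul]; exact hv
    · have hbdd : BddAbove (Set.range fun i => ‖y i‖ * a i k) := by
        refine ⟨‖y j‖ * a j k, ?_⟩
        rintro r ⟨i, rfl⟩
        show ‖y i‖ * a i k ≤ _
        rcases eq_or_ne i j with rfl | hij
        · exact le_rfl
        · rw [hy i hij, norm_zero, zero_mul]; exact hv
      exact le_ciSup hbdd j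
  cases P with
  | lp p hp =>
    have hp0 : p ≠ 0 := by positivity
    simp only [lambdaSeminorm]
    rw [tsum_eq_single j (fun i hi => by
      rw [hy i hi, norm_zero, zero_mul, Real.zero_rpow hp0])]
    rw [← Real.rpow_mul hv, mul_one_div_cancel hp0, Real.rpow_one]
  | linf => exact hsup
  | lzero => exact hsup

lemma seminorm_iter_le (a : ℕ → ℕ → ℝ) (ha : IsKoetheMatrix a) (P : PIndex) (w : ℕ → 𝕜)
    (k l m : ℕ) {γ : ℝ} (hγ : 0 ≤ γ)
    (key : ∀ n, (∏ j ∈ Icc 1 m, ‖w (n + j)‖) * a (n + m) k ≤ γ * a n l)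
    (x : ℕ → 𝕜) (hx : MemLambda a P x) :
    lambdaSeminorm a P k ((Fshift w)^[m] x) ≤ γ * lambdaSeminorm a P l x := by
  have ha0 := ha.1
  have hpt : ∀ q, ‖(Fshift w)^[m] x (q + m)‖ * a (q + m) k ≤ γ * (‖x q‖ * a q l) := by
    intro q
    rw [(Fshift_iterate w m x).1 q, norm_mul, norm_prod]
    calc (∏ j ∈ Icc 1 m, ‖w (q + j)‖) * ‖x q‖ * a (q + m) k
        = ((∏ j ∈ Icc 1 m, ‖w (q + j)‖) * a (q + m) k) * ‖x q‖ := by ring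
      _ ≤ (γ * a q l) * ‖x q‖ := mul_le_mul_of_nonneg_right (key q) (norm_nonneg _)
      _ = γ * (‖x q‖ * a q l) := by ring
  have hzero : ∀ i, i < m → ‖(Fshift w)^[m] x i‖ * a i k = 0 := by
    intro i hi
    rw [(Fshift_iterate w m x).2 i hi, norm_zero, zero_mul]
  have hsupbdd : ∀ (hbdd : BddAbove (Set.range fun q => ‖x q‖ * a q l)),
      (⨆ i, ‖(Fshift w)^[m] x i‖ * a i k) ≤ γ * ⨆ q, ‖x q‖ * a q l := by
    intro hbdd
    have hsup0 : 0 ≤ ⨆ q, ‖x q‖ * a q l :=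
      le_ciSup_of_le hbdd 0 (mul_nonneg (norm_nonneg _) (ha0 0 l))
    apply ciSup_le
    intro i
    rcases lt_or_ge i m with h | h
    · rw [hzero i h]; exact mul_nonneg hγ hsup0
    · obtain ⟨q, rfl⟩ : ∃ q, i = q + m := ⟨i - m, by omega⟩
      exact (hpt q).trans (mul_le_mul_of_nonneg_left (le_ciSup hbdd q) hγ)
  cases P with
  | lp p hp =>
    have hp0 : p ≠ 0 := by positivity
    have hp0' : 0 ≤ p := by positivity
    simp only [lambdaSeminorm]
    have hnn : ∀ i, (0:ℝ) ≤ ‖(Fshift w)^[m] x i‖ * a i k :=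
      fun i => mul_nonneg (norm_nonneg _) (ha0 i k)
    have hnn' : ∀ q, (0:ℝ) ≤ ‖x q‖ * a q l :=
      fun q => mul_nonneg (norm_nonneg _) (ha0 q l)
    have hshift : (∑' i, (‖(Fshift w)^[m] x i‖ * a i k) ^ p)
        = ∑' q, (‖(Fshift w)^[m] x (q + m)‖ * a (q + m) k) ^ p := by
      refine (Function.Injective.tsum_eq (add_left_injective m) ?_).symm
      intro i hi
      rcases lt_or_ge i m with h | h
      · exfalso
        apply hi
        show (‖(Fshift w)^[m] x i‖ * a i k) ^ p = 0
        rw [hzero i h, Real.zero_rpow hp0]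
      · exact ⟨i - m, by show i - m + m = i; omega⟩
    have hle : ∀ q, (‖(Fshift w)^[m] x (q + m)‖ * a (q + m) k) ^ p
        ≤ γ ^ p * (‖x q‖ * a q l) ^ p := by
      intro q
      rw [← Real.mul_rpow hγ (hnn' q)]
      exact Real.rpow_le_rpow (mul_nonneg (norm_nonneg _) (ha0 _ k)) (hpt q) hp0'
    have hsumR : Summable fun q => γ ^ p * (‖x q‖ * a q l) ^ p := (hx l).mul_left _
    have hsumL : Summable fun q => (‖(Fshift w)^[m] x (q + m)‖ * a (q + m) k) ^ p :=
      Summable.of_nonneg_of_le (fun q => Real.rpow_nonneg (hnn _) p) hle hsumR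
    calc (∑' i, (‖(Fshift w)^[m] x i‖ * a i k) ^ p) ^ (1/p)
        ≤ (γ ^ p * ∑' q, (‖x q‖ * a q l) ^ p) ^ (1/p) := by
          rw [hshift]
          refine Real.rpow_le_rpow (tsum_nonneg fun q => Real.rpow_nonneg (hnn _) p) ?_
            (by positivity)
          rw [← tsum_mul_left]
          exact Summable.tsum_le_tsum hle hsumL hsumR
      _ = γ * (∑' q, (‖x q‖ * a q l) ^ p) ^ (1/p) := by
          rw [Real.mul_rpow (Real.rpow_nonneg hγ p)
            (tsum_nonneg fun q => Real.rpow_nonneg (hnn' q) p),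
            ← Real.rpow_mul hγ, mul_one_div_cancel hp0, Real.rpow_one]
  | linf => exact hsupbdd (hx l)
  | lzero => exact hsupbdd (hx l).bddAbove_range

end Helpers

/-- Proposition 3.1 (b): characterization of topologizability of the weighted forward shift
`F_w` on `λ_p(A)` (the conventions `0/0 = 0`, `c/0 = ∞` for `c > 0` are built into `ℝ≥0∞`). -/
theorem statement4 {𝕜 : Type*} [RCLike 𝕜] (a : ℕ → ℕ → ℝ) (ha : IsKoetheMatrix a)
    (P : PIndex) (w : ℕ → 𝕜) (hc : ContinuousOnLambda a P (Fshift w)) :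
    TopologizableOnLambda a P (Fshift w) ↔
      ∀ k : ℕ, ∃ l : ℕ, ∀ m : ℕ,
        (⨆ n : ℕ, ENNReal.ofReal ((∏ j ∈ Icc 1 m, ‖w (n + j)‖) * a (n + m) k) /
          ENNReal.ofReal (a n l)) < ⊤ := by
  have ha0 := ha.1
  have hmono : ∀ n, Monotone (a n) := fun n => monotone_nat_of_le_succ (fun j => ha.2.1 n j)
  constructor
  · -- topologizable → sup condition
    intro htop k
    obtain ⟨l, hl⟩ := htop k
    refine ⟨max k l, fun m => ?_⟩
    obtain ⟨γ, hγ0, key⟩ : ∃ γ : ℝ, 0 ≤ γ ∧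
        ∀ n, (∏ j ∈ Icc 1 m, ‖w (n + j)‖) * a (n + m) k ≤ γ * a n (max k l) := by
      rcases Nat.eq_zero_or_pos m with hm | hm
      · subst hm
        exact ⟨1, zero_le_one, fun n => by simpa using hmono n (le_max_left k l)⟩
      · obtain ⟨γ, hγ, hb⟩ := hl m hm
        refine ⟨γ, hγ.le, fun n => ?_⟩
        have hsupp : ∀ i, i ≠ n + m → (Fshift w)^[m] (eVec n : ℕ → 𝕜) i = 0 := by
          intro i hi
          rcases lt_or_ge i m with h | h
          · exact (Fshift_iterate w m _).2 i h
          · obtain ⟨q, rfl⟩ : ∃ q, i = q + m := ⟨i - m, by omega⟩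
            rw [(Fshift_iterate w m _).1 q]
            have hq : (eVec n : ℕ → 𝕜) q = 0 := by
              simp only [eVec, ite_eq_right_iff]
              intro h; exfalso; omega
            rw [hq, mul_zero]
        have h1 := hb (eVec n) (mem_single a P (eVec n) n (fun i hi => by simp [eVec, hi]))
        rw [seminorm_single_s4 a ha0 P k _ (n + m) hsupp,
          seminorm_single_s4 a ha0 P l (eVec n) n (fun i hi => by simp [eVec, hi])] at h1
        have hval : ‖(Fshift w)^[m] (eVec n : ℕ → 𝕜) (n + m)‖
            = ∏ j ∈ Icc 1 m, ‖w (n + j)‖ := by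
          rw [(Fshift_iterate w m _).1 n]
          simp [eVec, norm_prod]
        rw [hval] at h1
        calc (∏ j ∈ Icc 1 m, ‖w (n + j)‖) * a (n + m) k
            ≤ γ * (‖(eVec n : ℕ → 𝕜) n‖ * a n l) := h1
          _ = γ * a n l := by simp [eVec]
          _ ≤ γ * a n (max k l) :=
            mul_le_mul_of_nonneg_left (hmono n (le_max_right k l)) hγ.le
    refine lt_of_le_of_lt (iSup_le fun n => ?_) (ENNReal.ofReal_lt_top (r := γ))
    apply ENNReal.div_le_of_le_mul
    rw [← ENNReal.ofReal_mul hγ0]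
    exact ENNReal.ofReal_le_ofReal (key n)
  · -- sup condition → topologizable
    intro hR k
    obtain ⟨l, hl⟩ := hR k
    refine ⟨l, fun m hm => ?_⟩
    have hSlt := hl m
    set S := ⨆ n : ℕ, ENNReal.ofReal ((∏ j ∈ Icc 1 m, ‖w (n + j)‖) * a (n + m) k) /
        ENNReal.ofReal (a n l) with hS
    set γ := S.toReal + 1 with hγdef
    have hγpos : 0 < γ := by positivity
    have key : ∀ n, (∏ j ∈ Icc 1 m, ‖w (n + j)‖) * a (n + m) k ≤ γ * a n l := by
      intro n
      have hnum : (0:ℝ) ≤ (∏ j ∈ Icc 1 m, ‖w (n + j)‖) * a (n + m) k :=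
        mul_nonneg (Finset.prod_nonneg fun j _ => norm_nonneg _) (ha0 _ k)
      have h1 : ENNReal.ofReal ((∏ j ∈ Icc 1 m, ‖w (n + j)‖) * a (n + m) k) /
          ENNReal.ofReal (a n l) ≤ S := le_iSup (fun n => ENNReal.ofReal
          ((∏ j ∈ Icc 1 m, ‖w (n + j)‖) * a (n + m) k) / ENNReal.ofReal (a n l)) n
      rcases eq_or_lt_of_le (ha0 n l) with hd | hd
      · have hz : ENNReal.ofReal ((∏ j ∈ Icc 1 m, ‖w (n + j)‖) * a (n + m) k) = 0 := by
          by_contra h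
          rw [← hd, ENNReal.ofReal_zero, ENNReal.div_zero h] at h1
          exact absurd (h1.trans_lt hSlt) (lt_irrefl _)
        have : (∏ j ∈ Icc 1 m, ‖w (n + j)‖) * a (n + m) k = 0 :=
          le_antisymm (by simpa [ENNReal.ofReal_eq_zero] using hz) hnum
        rw [this, ← hd, mul_zero]
      · have hb0 : ENNReal.ofReal (a n l) ≠ 0 := by
          simp [ENNReal.ofReal_eq_zero, not_le, hd]
        have h2 : ENNReal.ofReal ((∏ j ∈ Icc 1 m, ‖w (n + j)‖) * a (n + m) k)
            ≤ S * ENNReal.ofReal (a n l) :=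
          (ENNReal.div_le_iff hb0 ENNReal.ofReal_ne_top).mp h1
        have hfin : S * ENNReal.ofReal (a n l) ≠ ⊤ :=
          ENNReal.mul_ne_top hSlt.ne ENNReal.ofReal_ne_top
        calc (∏ j ∈ Icc 1 m, ‖w (n + j)‖) * a (n + m) k
            = (ENNReal.ofReal ((∏ j ∈ Icc 1 m, ‖w (n + j)‖) * a (n + m) k)).toReal :=
              (ENNReal.toReal_ofReal hnum).symm
          _ ≤ (S * ENNReal.ofReal (a n l)).toReal := ENNReal.toReal_mono hfin h2
          _ = S.toReal * a n l := by rw [ENNReal.toReal_mul, ENNReal.toReal_ofReal hd.le]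
          _ ≤ γ * a n l := by
              have : S.toReal ≤ γ := by rw [hγdef]; linarith
              exact mul_le_mul_of_nonneg_right this hd.le
    exact ⟨γ, hγpos, fun x hx => seminorm_iter_le a ha P w k l m hγpos.le key x hx⟩
end
end

section
/- Let A be a Köthe matrix, p ∈ [1,∞] ∪ {0}, and w ∈ 𝕂^{ℕ₀} such that B_w is continuous on λ_p(A). Then B_w is power bounded on λ_p(A) if and only if for every k ∈ ℕ₀ there is l ∈ ℕ₀ such that sup_{n∈ℕ₀, m∈ℕ} ( (∏_{j=0}^{m−1} |w_{n+j}|) · a_{n,k} ) / a_{n+m,l} < ∞. -/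
open Filter Finset
open scoped ENNReal

noncomputable section

variable {𝕜 : Type*} [RCLike 𝕜]

namespace KoetheAux

variable {𝕜 : Type*} [RCLike 𝕜]

lemma bshift_iter_apply (w x : ℕ → 𝕜) (m i : ℕ) :
    (Bshift w)^[m] x i = (∏ j ∈ range m, w (i + j)) * x (i + m) := by
  induction m generalizing x with
  | zero => simp
  | succ m ih =>
    rw [Function.iterate_succ_apply, ih, prod_range_succ]
    simp only [Bshift]
    rw [show i + (m+1) = i + m + 1 by omega]
    ring

/-- The sequence which is `c` at `N` and `0` elsewhere. -/
def kSingle (c : 𝕜) (N : ℕ) : ℕ → 𝕜 := fun i => if i = N then c else 0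

lemma norm_kSingle (c : 𝕜) (N i : ℕ) :
    ‖kSingle c N i‖ = if i = N then ‖c‖ else 0 := by
  unfold kSingle; split <;> simp

lemma memLambda_kSingle (a : ℕ → ℕ → ℝ) (ha : IsKoetheMatrix a) (P : PIndex)
    (c : 𝕜) (N : ℕ) : MemLambda a P (kSingle c N) := by
  cases P with
  | lp p hp =>
    intro k
    apply summable_of_ne_finset_zero (s := {N})
    intro n hn
    simp only [mem_singleton] at hn
    rw [norm_kSingle, if_neg hn, zero_mul, Real.zero_rpow (by linarith)]
  | linf =>
    intro k
    refine ⟨‖c‖ * a N k, ?_⟩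
    rintro r ⟨n, rfl⟩
    dsimp only
    rw [norm_kSingle]
    by_cases h : n = N
    · subst h; simp
    · rw [if_neg h, zero_mul]
      have := ha.1 N k
      positivity
  | lzero =>
    intro k
    apply Tendsto.congr' (f₁ := fun _ => (0 : ℝ)) _ tendsto_const_nhds
    filter_upwards [eventually_ge_atTop (N + 1)] with n hn
    rw [norm_kSingle, if_neg (by omega), zero_mul]

lemma seminorm_kSingle (a : ℕ → ℕ → ℝ) (ha : IsKoetheMatrix a) (P : PIndex) (k : ℕ)
    (c : 𝕜) (N : ℕ) : lambdaSeminorm a P k (kSingle c N) = ‖c‖ * a N k := by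
  have hak : 0 ≤ a N k := ha.1 N k
  have hsup : (⨆ n, ‖kSingle c N n‖ * a n k) = ‖c‖ * a N k := by
    apply le_antisymm
    · apply ciSup_le
      intro n
      rw [norm_kSingle]
      by_cases h : n = N
      · subst h; simp
      · rw [if_neg h, zero_mul]; positivity
    · have hb : BddAbove (Set.range fun n => ‖kSingle c N n‖ * a n k) := by
        have := memLambda_kSingle a ha PIndex.linf c N k
        exact this
      have := le_ciSup hb N
      simpa [norm_kSingle] using this
  cases P with
  | lp p hp =>
    have hp0 : (0:ℝ) < p := lt_of_lt_of_le one_pos hp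
    show (∑' n, (‖kSingle c N n‖ * a n k) ^ p) ^ (1/p) = ‖c‖ * a N k
    rw [tsum_eq_single N]
    · rw [norm_kSingle, if_pos rfl,
        ← Real.rpow_mul (by positivity : (0:ℝ) ≤ ‖c‖ * a N k),
        mul_one_div, div_self hp0.ne', Real.rpow_one]
    · intro n hn
      rw [norm_kSingle, if_neg hn, zero_mul, Real.zero_rpow hp0.ne']
  | linf => exact hsup
  | lzero => exact hsup

lemma memLambda_iter (a : ℕ → ℕ → ℝ) (P : PIndex) (T : (ℕ → 𝕜) → ℕ → 𝕜)
    (hT : MapsLambda a P T) (m : ℕ) (x : ℕ → 𝕜) (hx : MemLambda a P x) :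
    MemLambda a P (T^[m] x) := by
  induction m with
  | zero => exact hx
  | succ m ih => rw [Function.iterate_succ_apply']; exact hT _ ih

lemma bddAbove_of_mem (a : ℕ → ℕ → ℝ) (P : PIndex) (hP : P = PIndex.linf ∨ P = PIndex.lzero)
    (x : ℕ → 𝕜) (hx : MemLambda a P x) (l : ℕ) :
    BddAbove (Set.range fun n => ‖x n‖ * a n l) := by
  rcases hP with rfl | rfl
  · exact hx l
  · exact (hx l).bddAbove_range

/-- The key seminorm estimate. -/
lemma seminorm_bound (a : ℕ → ℕ → ℝ) (ha : IsKoetheMatrix a) (P : PIndex) (w : ℕ → 𝕜)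
    (k l : ℕ) (C : ℝ) (hC : 0 < C)
    (key : ∀ n m : ℕ, 1 ≤ m → (∏ j ∈ range m, ‖w (n + j)‖) * a n k ≤ C * a (n + m) l)
    (m : ℕ) (hm : 1 ≤ m) (x : ℕ → 𝕜) (hx : MemLambda a P x)
    (hBx : MemLambda a P ((Bshift w)^[m] x)) :
    lambdaSeminorm a P k ((Bshift w)^[m] x) ≤ C * lambdaSeminorm a P l x := by
  have hpt : ∀ i, ‖((Bshift w)^[m] x) i‖ * a i k ≤ C * (‖x (i + m)‖ * a (i + m) l) := by
    intro i
    rw [bshift_iter_apply, norm_mul, norm_prod]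
    calc (∏ j ∈ range m, ‖w (i+j)‖) * ‖x (i+m)‖ * a i k
        = ‖x (i+m)‖ * ((∏ j ∈ range m, ‖w (i+j)‖) * a i k) := by ring
      _ ≤ ‖x (i+m)‖ * (C * a (i+m) l) :=
          mul_le_mul_of_nonneg_left (key i m hm) (norm_nonneg _)
      _ = C * (‖x (i+m)‖ * a (i+m) l) := by ring
  have hsupcase : (P = PIndex.linf ∨ P = PIndex.lzero) →
      (⨆ i, ‖((Bshift w)^[m] x) i‖ * a i k) ≤ C * ⨆ n, ‖x n‖ * a n l := by
    intro hP
    have hb := bddAbove_of_mem a P hP x hx l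
    apply ciSup_le
    intro i
    calc ‖((Bshift w)^[m] x) i‖ * a i k ≤ C * (‖x (i+m)‖ * a (i+m) l) := hpt i
      _ ≤ C * ⨆ n, ‖x n‖ * a n l :=
          mul_le_mul_of_nonneg_left (le_ciSup hb (i + m)) hC.le
  cases P with
  | lp p hp =>
    have hp0 : (0:ℝ) < p := lt_of_lt_of_le one_pos hp
    show (∑' i, (‖((Bshift w)^[m] x) i‖ * a i k) ^ p) ^ (1/p)
        ≤ C * (∑' n, (‖x n‖ * a n l) ^ p) ^ (1/p)
    have hnn : ∀ i, 0 ≤ ‖((Bshift w)^[m] x) i‖ * a i k := by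
      intro i; have := ha.1 i k; positivity
    have hnn2 : ∀ n, 0 ≤ ‖x n‖ * a n l := by
      intro n; have := ha.1 n l; positivity
    have hterm : ∀ i, (‖((Bshift w)^[m] x) i‖ * a i k) ^ p
        ≤ C ^ p * (‖x (i+m)‖ * a (i+m) l) ^ p := by
      intro i
      rw [← Real.mul_rpow hC.le (hnn2 (i+m))]
      exact Real.rpow_le_rpow (hnn i) (hpt i) hp0.le
    have hsum2 : Summable (fun i => (‖x (i+m)‖ * a (i+m) l) ^ p) :=
      (hx l).comp_injective (add_left_injective m)
    have h1 : (∑' i, (‖((Bshift w)^[m] x) i‖ * a i k) ^ p)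
        ≤ ∑' i, C ^ p * (‖x (i+m)‖ * a (i+m) l) ^ p :=
      Summable.tsum_le_tsum hterm (hBx k) (hsum2.mul_left _)
    have h3 : (∑' i, (‖x (i+m)‖ * a (i+m) l) ^ p) ≤ ∑' n, (‖x n‖ * a n l) ^ p :=
      tsum_comp_le_tsum_of_inj (hx l) (fun n => by
          have := hnn2 n; positivity) (add_left_injective m)
    have h2 : (∑' i, (‖((Bshift w)^[m] x) i‖ * a i k) ^ p)
        ≤ C ^ p * ∑' n, (‖x n‖ * a n l) ^ p := by
      rw [tsum_mul_left] at h1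
      exact h1.trans (mul_le_mul_of_nonneg_left h3 (by positivity))
    calc (∑' i, (‖((Bshift w)^[m] x) i‖ * a i k) ^ p) ^ (1/p)
        ≤ (C ^ p * ∑' n, (‖x n‖ * a n l) ^ p) ^ (1/p) :=
          Real.rpow_le_rpow (tsum_nonneg fun i => by have := hnn i; positivity) h2
            (by positivity)
      _ = C * (∑' n, (‖x n‖ * a n l) ^ p) ^ (1/p) := by
          rw [Real.mul_rpow (by positivity)
              (tsum_nonneg fun n => by have := hnn2 n; positivity),
            ← Real.rpow_mul hC.le, mul_one_div, div_self hp0.ne', Real.rpow_one]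
  | linf => exact hsupcase (Or.inl rfl)
  | lzero => exact hsupcase (Or.inr rfl)

end KoetheAux

/-- Proposition 3.2 (a): characterization of power boundedness of the weighted backward shift
`B_w` on `λ_p(A)`. -/
theorem statement5 {𝕜 : Type*} [RCLike 𝕜] (a : ℕ → ℕ → ℝ) (ha : IsKoetheMatrix a)
    (P : PIndex) (w : ℕ → 𝕜) (hc : ContinuousOnLambda a P (Bshift w)) :
    PowerBoundedOnLambda a P (Bshift w) ↔
      ∀ k : ℕ, ∃ l : ℕ,
        (⨆ (n : ℕ) (m : ℕ) (_ : 1 ≤ m),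
          ENNReal.ofReal ((∏ j ∈ range m, ‖w (n + j)‖) * a n k) /
            ENNReal.ofReal (a (n + m) l)) < ⊤ := by
  constructor
  · -- power bounded → sup condition
    intro hpb k
    obtain ⟨l, C, hC, hbound⟩ := hpb k
    refine ⟨l, lt_of_le_of_lt
      (iSup_le fun n => iSup_le fun m => iSup_le fun hm =>
        (?_ : _ ≤ ENNReal.ofReal C))
      ENNReal.ofReal_lt_top⟩
    have hmem := KoetheAux.memLambda_kSingle a ha P (1 : 𝕜) (n + m)
    have hiter : (Bshift w)^[m] (KoetheAux.kSingle (1 : 𝕜) (n + m))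
        = KoetheAux.kSingle (∏ j ∈ range m, w (n + j)) n := by
      funext i
      rw [KoetheAux.bshift_iter_apply]
      unfold KoetheAux.kSingle
      by_cases h : i = n
      · subst h; simp
      · rw [if_neg (by omega : ¬ i + m = n + m), if_neg h, mul_zero]
    have hkey : (∏ j ∈ range m, ‖w (n + j)‖) * a n k ≤ C * a (n + m) l := by
      have := hbound m hm (KoetheAux.kSingle (1 : 𝕜) (n + m)) hmem
      rw [hiter, KoetheAux.seminorm_kSingle a ha P k _ n,
        KoetheAux.seminorm_kSingle a ha P l _ (n + m), norm_prod] at this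
      simpa using this
    apply ENNReal.div_le_of_le_mul
    rw [← ENNReal.ofReal_mul hC.le]
    exact ENNReal.ofReal_le_ofReal hkey
  · -- sup condition → power bounded
    intro hsup k
    obtain ⟨l, hS⟩ := hsup k
    set S := (⨆ (n : ℕ) (m : ℕ) (_ : 1 ≤ m),
      ENNReal.ofReal ((∏ j ∈ range m, ‖w (n + j)‖) * a n k) /
        ENNReal.ofReal (a (n + m) l)) with hSdef
    set C : ℝ := S.toReal + 1 with hCdef
    have hC : 0 < C := by positivity
    have key : ∀ n m : ℕ, 1 ≤ m →
        (∏ j ∈ range m, ‖w (n + j)‖) * a n k ≤ C * a (n + m) l := by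
      intro n m hm
      have hnum : 0 ≤ (∏ j ∈ range m, ‖w (n + j)‖) * a n k := by
        have := ha.1 n k; positivity
      have hden : 0 ≤ a (n + m) l := ha.1 (n + m) l
      have h1 : ENNReal.ofReal ((∏ j ∈ range m, ‖w (n + j)‖) * a n k) /
          ENNReal.ofReal (a (n + m) l) ≤ S := by
        rw [hSdef]
        exact le_iSup_of_le n (le_iSup_of_le m (le_iSup_of_le hm le_rfl))
      rcases eq_or_lt_of_le hden with hd0 | hd0
      · -- denominator is zero: numerator must vanish
        have hnum0 : (∏ j ∈ range m, ‖w (n + j)‖) * a n k = 0 := by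
          by_contra h0
          have hpos : 0 < (∏ j ∈ range m, ‖w (n + j)‖) * a n k :=
            lt_of_le_of_ne hnum (Ne.symm h0)
          rw [← hd0, ENNReal.ofReal_zero,
            ENNReal.div_zero (by simp [ENNReal.ofReal_eq_zero, not_le, hpos])] at h1
          exact (lt_irrefl ⊤ (lt_of_le_of_lt h1 hS)).elim
        rw [hnum0, ← hd0, mul_zero]
      · have hdne : ENNReal.ofReal (a (n + m) l) ≠ 0 := by
          simp [ENNReal.ofReal_eq_zero, not_le, hd0]
        have h2 : S ≤ ENNReal.ofReal C := by
          rw [← ENNReal.ofReal_toReal hS.ne]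
          exact ENNReal.ofReal_le_ofReal (by simp [hCdef])
        have h3 : ENNReal.ofReal ((∏ j ∈ range m, ‖w (n + j)‖) * a n k)
            ≤ ENNReal.ofReal C * ENNReal.ofReal (a (n + m) l) :=
          (ENNReal.div_le_iff hdne ENNReal.ofReal_ne_top).mp (h1.trans h2)
        rw [← ENNReal.ofReal_mul hC.le] at h3
        exact (ENNReal.ofReal_le_ofReal_iff (by positivity)).mp h3
    refine ⟨l, C, hC, fun m hm x hx => ?_⟩
    exact KoetheAux.seminorm_bound a ha P w k l C hC key m hm x hx
      (KoetheAux.memLambda_iter a P (Bshift w) hc.1 m x hx)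
end
end
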